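/- arXiv:2304.08432 — 13 statements merged into one kernel-verified Lean document; each statement's English description precedes it below -/
import Mathlib

section
/- Let v_j > v_k ≥ 0 be a consumer's values for the products of firms j and k, let p̄_j, p̄_k ≥ 0 be the firms' posted off-platform prices, and let u ≥ 0 be the consumer's best utility from all remaining firms. Define firm j's truthful second-price bid as b_j = max( min( p̄_j , v_j − max(u, v_k − p̄_k, 0) ), 0 ) and firm k's bid as b_k = max( min( p̄_k , v_k − max(u, v_j − p̄_j, 0) ), 0 ). Then b_j ≥ b_k. (In any bidding equilibrium of the data-augmented second-price auction, the firm for which the consumer has the higher value bids at least as much as any other firm, regardless of the posted prices; hence the sponsored-slot allocation is efficient.) -/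
/-!
Write `c(v', p') = max(u, v' - p', 0)` for the utility a firm must concede when the rival's
value is `v'` and its posted price `p'`, so the bid is `max (min p (v - c)) 0`. It suffices that
the pre-truncation bid `m = min p̄_k (v_k - c(v_j, p̄_j))` of the low-value firm `k` lies below
both arguments of firm `j`'s minimum. It is below `p̄_j` because `c(v_j, p̄_j) ≥ v_j - p̄_j` and
`v_k ≤ v_j`; and `c(v_k, p̄_k) ≤ v_j - m` holds term by term: `m ≤ v_k - u`, `m ≤ p̄_k` and
`m ≤ v_k` each give one of the three bounds.
-/

variable {α : Type*} [AddCommGroup α] [LinearOrder α]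

def concededUtility (u v' p' : α) : α := max u (max (v' - p') 0)

def truthfulBid (u v p v' p' : α) : α := max (min p (v - concededUtility u v' p')) 0

lemma sub_le_concededUtility (u v' p' : α) : v' - p' ≤ concededUtility u v' p' :=
  le_max_of_le_right (le_max_left _ _)

lemma le_concededUtility (u v' p' : α) : u ≤ concededUtility u v' p' :=
  le_max_left _ _

lemma concededUtility_nonneg (u v' p' : α) : 0 ≤ concededUtility u v' p' :=
  le_max_of_le_right (le_max_right _ _)

section
variable [IsOrderedAddMonoid α] {u vj pj vk pk : α}

lemma min_sub_concededUtility_le_price (h : vk ≤ vj) :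
    min pk (vk - concededUtility u vj pj) ≤ pj :=
  (min_le_right _ _).trans <| sub_le_comm.mp <|
    (sub_le_sub_right h pj).trans (sub_le_concededUtility u vj pj)

lemma concededUtility_le_sub_min (h : vk ≤ vj) :
    concededUtility u vk pk ≤ vj - min pk (vk - concededUtility u vj pj) := by
  have hle_price := min_le_left pk (vk - concededUtility u vj pj)
  have hle_value := min_le_right pk (vk - concededUtility u vj pj)
  refine max_le ?_ (max_le ?_ ?_)
  · exact le_sub_comm.mp <| hle_value.trans (sub_le_sub h (le_concededUtility u vj pj))
  · exact sub_le_sub h hle_price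
  · exact sub_nonneg.mpr <|
      hle_value.trans ((sub_le_self vk (concededUtility_nonneg u vj pj)).trans h)

theorem truthfulBid_le_truthfulBid (h : vk ≤ vj) :
    truthfulBid u vk pk vj pj ≤ truthfulBid u vj pj vk pk :=
  max_le_max_right 0 <| le_min (min_sub_concededUtility_le_price h)
    (le_sub_comm.mp (concededUtility_le_sub_min h))

end

theorem efficient_bidding_general
    (vj vk pbj pbk u : ℝ)
    (hv : vk < vj) :
    max (min pbk (vk - max u (max (vj - pbj) 0))) 0
      ≤ max (min pbj (vj - max u (max (vk - pbk) 0))) 0 :=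
  truthfulBid_le_truthfulBid hv.le

/-- In any bidding equilibrium of the data-augmented second-price
auction, the firm for which the consumer has the higher value bids at least as
much as any other firm, regardless of the posted prices. -/
theorem efficient_bidding
    (vj vk pbj pbk u : ℝ)
    (hvk : 0 ≤ vk) (hv : vk < vj)
    (hpj : 0 ≤ pbj) (hpk : 0 ≤ pbk) (hu : 0 ≤ u) :
    max (min pbk (vk - max u (max (vj - pbj) 0))) 0
      ≤ max (min pbj (vj - max u (max (vk - pbk) 0))) 0 :=
  efficient_bidding_general vj vk pbj pbk u hv
end

section
/- Define Ω(p) = ∫₀¹ ( ∫₀^v min(v − v′, p) · (J−1)·F(v′)^{J−2}·f(v′) dv′ ) f(v) dv. For every p ∈ (0,1), Ω is differentiable at p with derivative Ω′(p) = ∫_p^1 F(v − p)^{J−1} f(v) dv. -/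
open intervalIntegral MeasureTheory Set

lemma inner_eq (F h : ℝ → ℝ) (n : ℕ) (hn : 1 ≤ n)
    (hFc : ContinuousOn F (Set.Icc 0 1)) (hF0 : F 0 = 0)
    (hhc : ContinuousOn h (Set.Icc 0 1))
    (hHd : ∀ x ∈ Set.Ioo (0:ℝ) 1, HasDerivAt (fun t => F t ^ n) (h x) x)
    {v q : ℝ} (hv : v ∈ Set.Icc (0:ℝ) 1) (hq : 0 < q) :
    ∫ v' in (0:ℝ)..v, min (v - v') q * h v' = ∫ t in (max 0 (v - q))..v, F t ^ n := by
  obtain ⟨hv0, hv1⟩ := hv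
  set c := max 0 (v - q) with hcdef
  have hc0 : 0 ≤ c := le_max_left _ _
  have hcv : c ≤ v := max_le hv0 (by linarith)
  have hc1 : c ≤ 1 := hcv.trans hv1
  have hHcont : ContinuousOn (fun t => F t ^ n) (Set.Icc 0 1) := hFc.pow n
  have hm_cont : ContinuousOn (fun v' => min (v - v') q * h v') (Set.Icc 0 1) :=
    (((continuous_const.sub continuous_id).min continuous_const).continuousOn).mul hhc
  have hsub : ∀ a b : ℝ, a ∈ Set.Icc (0:ℝ) 1 → b ∈ Set.Icc (0:ℝ) 1 →
      Set.uIcc a b ⊆ Set.Icc (0:ℝ) 1 := fun a b ha hb => Set.uIcc_subset_Icc ha hb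
  have hmem : ∀ x : ℝ, 0 ≤ x → x ≤ 1 → x ∈ Set.Icc (0:ℝ) 1 := fun x h1 h2 => ⟨h1, h2⟩
  have int1 : IntervalIntegrable (fun v' => min (v - v') q * h v') volume 0 c :=
    (hm_cont.mono (hsub 0 c ⟨le_rfl, zero_le_one⟩ ⟨hc0, hc1⟩)).intervalIntegrable
  have int2 : IntervalIntegrable (fun v' => min (v - v') q * h v') volume c v :=
    (hm_cont.mono (hsub c v ⟨hc0, hc1⟩ ⟨hv0, hv1⟩)).intervalIntegrable
  have part1 : ∫ v' in (0:ℝ)..c, min (v - v') q * h v' = q * F c ^ n := by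
    rcases le_or_gt (v - q) 0 with hvq | hvq
    · have hc' : c = 0 := max_eq_left (by linarith)
      rw [hc', intervalIntegral.integral_same, hF0, zero_pow (by omega), mul_zero]
    · have hcvq : c = v - q := max_eq_right hvq.le
      have h1 : ∫ v' in (0:ℝ)..c, min (v - v') q * h v' = ∫ v' in (0:ℝ)..c, q * h v' := by
        apply intervalIntegral.integral_congr
        intro x hx
        rw [Set.uIcc_of_le hc0] at hx
        have hxq : q ≤ v - x := by
          have := hx.2; rw [hcvq] at this; linarith
        simp [min_eq_right hxq]
      have h2 : ∫ v' in (0:ℝ)..c, h v' = F c ^ n - F 0 ^ n := by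
        apply intervalIntegral.integral_eq_sub_of_hasDeriv_right_of_le hc0
          (hHcont.mono (Set.Icc_subset_Icc le_rfl hc1))
          (fun x hx => (hHd x ⟨hx.1, lt_of_lt_of_le hx.2 hc1⟩).hasDerivWithinAt)
          ((hhc.mono (hsub 0 c ⟨le_rfl, zero_le_one⟩ ⟨hc0, hc1⟩)).intervalIntegrable)
      rw [h1, intervalIntegral.integral_const_mul, h2, hF0, zero_pow (by omega), sub_zero]
  have part2 : ∫ v' in c..v, min (v - v') q * h v'
      = -((v - c) * F c ^ n) + ∫ t in c..v, F t ^ n := by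
    have hcong : ∫ v' in c..v, min (v - v') q * h v' = ∫ v' in c..v, (v - v') * h v' := by
      apply intervalIntegral.integral_congr
      intro x hx
      rw [Set.uIcc_of_le hcv] at hx
      have hge : v - q ≤ c := le_max_right _ _
      have : v - x ≤ q := by linarith [hx.1]
      simp [min_eq_left this]
    have hPcont : ContinuousOn (fun x => ∫ t in c..x, F t ^ n) (Set.Icc c v) := by
      have := intervalIntegral.continuousOn_primitive_interval
        (a := c) (b := v) (μ := volume) (f := fun t => F t ^ n)
        (by rw [Set.uIcc_of_le hcv]
            exact (hHcont.mono (Set.Icc_subset_Icc hc0 hv1)).integrableOn_Icc)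
      rwa [Set.uIcc_of_le hcv] at this
    have key : ∫ v' in c..v, (v - v') * h v'
        = ((v - v) * F v ^ n + ∫ t in c..v, F t ^ n)
          - ((v - c) * F c ^ n + ∫ t in c..c, F t ^ n) := by
      apply intervalIntegral.integral_eq_sub_of_hasDeriv_right_of_le
        (f := fun x => (v - x) * F x ^ n + ∫ t in c..x, F t ^ n)
        (f' := fun x => (v - x) * h x) hcv
      · exact (((continuousOn_const.sub continuousOn_id).mul
          (hHcont.mono (Set.Icc_subset_Icc hc0 hv1))).add hPcont)
      · intro x hx
        have hx01 : x ∈ Set.Ioo (0:ℝ) 1 := ⟨lt_of_le_of_lt hc0 hx.1, lt_of_lt_of_le hx.2 hv1⟩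
        have hd1 : HasDerivAt (fun y => (v - y) * F y ^ n)
            ((-1) * F x ^ n + (v - x) * h x) x :=
          ((hasDerivAt_id x).const_sub v).mul (hHd x hx01)
        have hd2 : HasDerivAt (fun y => ∫ t in c..y, F t ^ n) (F x ^ n) x := by
          apply intervalIntegral.integral_hasDerivAt_right
          · exact (hHcont.mono (hsub c x ⟨hc0, hc1⟩ ⟨hx01.1.le, hx01.2.le⟩)).intervalIntegrable
          · exact ContinuousOn.stronglyMeasurableAtFilter isOpen_Ioo
              (hHcont.mono Set.Ioo_subset_Icc_self) x hx01
          · exact hHcont.continuousAt (Icc_mem_nhds hx01.1 hx01.2)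
        have hsum := hd1.add hd2
        have heq : (-1) * F x ^ n + (v - x) * h x + F x ^ n = (v - x) * h x := by ring
        rw [heq] at hsum
        exact hsum.hasDerivWithinAt
      · apply ContinuousOn.intervalIntegrable
        rw [Set.uIcc_of_le hcv]
        exact (continuousOn_const.sub continuousOn_id).mul
          (hhc.mono (Set.Icc_subset_Icc hc0 hv1))
    rw [hcong, key, intervalIntegral.integral_same]
    ring
  have split := intervalIntegral.integral_add_adjacent_intervals int1 int2
  rw [← split, part1, part2]
  have hzero : q * F c ^ n + -((v - c) * F c ^ n) = 0 := by
    rcases le_or_gt (v - q) 0 with hvq | hvq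
    · have hc' : c = 0 := max_eq_left (by linarith)
      rw [hc', hF0, zero_pow (by omega)]; ring
    · have hcvq : c = v - q := max_eq_right hvq.le
      rw [hcvq]; ring
  rw [← add_assoc, hzero, zero_add]

/-- The on-platform profit Ω is differentiable in the posted
price p, with derivative ∫_p^1 F(v − p)^{J−1} f(v) dv. -/
theorem on_platform_profit_derivative
    (f F : ℝ → ℝ)
    (hf_cont : ContinuousOn f (Set.Icc 0 1))
    (hf_pos : ∀ x ∈ Set.Icc (0:ℝ) 1, 0 < f x)
    (hf_logconcave : ConcaveOn ℝ (Set.Icc 0 1) (Real.log ∘ f))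
    (hf_int : (∫ t in (0:ℝ)..1, f t) = 1)
    (hF : ∀ x, F x = ∫ t in (0:ℝ)..x, f t)
    (J : ℕ) (hJ : 2 ≤ J)
    (p : ℝ) (hp : p ∈ Set.Ioo (0:ℝ) 1) :
    HasDerivAt
      (fun q : ℝ => ∫ v in (0:ℝ)..1,
          (∫ v' in (0:ℝ)..v,
              min (v - v') q * (((J : ℝ) - 1) * F v' ^ (J - 2) * f v')) * f v)
      (∫ v in p..1, F (v - p) ^ (J - 1) * f v) p := by
  obtain ⟨hp0, hp1⟩ := hp
  set h : ℝ → ℝ := fun t => ((J : ℝ) - 1) * F t ^ (J - 2) * f t with hhdef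
  -- basic facts
  have hsub : ∀ a b : ℝ, a ∈ Set.Icc (0:ℝ) 1 → b ∈ Set.Icc (0:ℝ) 1 →
      Set.uIcc a b ⊆ Set.Icc (0:ℝ) 1 := fun a b ha hb => Set.uIcc_subset_Icc ha hb
  have h01 : Set.uIcc (0:ℝ) 1 = Set.Icc 0 1 := Set.uIcc_of_le zero_le_one
  have hintf : ∀ a b : ℝ, a ∈ Set.Icc (0:ℝ) 1 → b ∈ Set.Icc (0:ℝ) 1 →
      IntervalIntegrable f volume a b := fun a b ha hb =>
    (hf_cont.mono (hsub a b ha hb)).intervalIntegrable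
  have hFc : ContinuousOn F (Set.Icc 0 1) := by
    have hprim : ContinuousOn (fun x => ∫ t in (0:ℝ)..x, f t) (Set.Icc 0 1) := by
      have := intervalIntegral.continuousOn_primitive_interval (a := (0:ℝ)) (b := 1)
        (μ := volume) (f := f) (by rw [h01]; exact hf_cont.integrableOn_Icc)
      rwa [h01] at this
    exact hprim.congr (fun x _ => hF x)
  have hF0 : F 0 = 0 := by rw [hF 0, intervalIntegral.integral_same]
  have hF1 : F 1 = 1 := by rw [hF 1]; exact hf_int
  have hFderiv : ∀ x ∈ Set.Ioo (0:ℝ) 1, HasDerivAt F (f x) x := by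
    intro x hx
    have h1 : HasDerivAt (fun u => ∫ t in (0:ℝ)..u, f t) (f x) x :=
      intervalIntegral.integral_hasDerivAt_right
        (hintf 0 x ⟨le_rfl, zero_le_one⟩ ⟨hx.1.le, hx.2.le⟩)
        (ContinuousOn.stronglyMeasurableAtFilter isOpen_Ioo
          (hf_cont.mono Set.Ioo_subset_Icc_self) x hx)
        (hf_cont.continuousAt (Icc_mem_nhds hx.1 hx.2))
    have : F = fun u => ∫ t in (0:ℝ)..u, f t := funext hF
    rw [this]
    exact h1
  have hJ1 : 1 ≤ J - 1 := by omega
  have hcast : ((J - 1 : ℕ) : ℝ) = (J : ℝ) - 1 := by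
    rw [Nat.cast_sub (by omega)]; norm_num
  have hHd : ∀ x ∈ Set.Ioo (0:ℝ) 1, HasDerivAt (fun t => F t ^ (J - 1)) (h x) x := by
    intro x hx
    have := (hFderiv x hx).pow (J - 1)
    have he : J - 1 - 1 = J - 2 := by omega
    rw [he, hcast] at this
    exact this
  have hhc : ContinuousOn h (Set.Icc 0 1) :=
    (continuousOn_const.mul (hFc.pow _)).mul hf_cont
  have hHcont : ContinuousOn (fun t => F t ^ (J - 1)) (Set.Icc 0 1) := hFc.pow _
  have hF_nonneg : ∀ t ∈ Set.Icc (0:ℝ) 1, 0 ≤ F t := by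
    intro t ht
    rw [hF t]
    exact intervalIntegral.integral_nonneg ht.1
      (fun u hu => (hf_pos u ⟨hu.1, hu.2.trans ht.2⟩).le)
  have hF_le1 : ∀ t ∈ Set.Icc (0:ℝ) 1, F t ≤ 1 := by
    intro t ht
    have hs : (∫ x in (0:ℝ)..1, f x) - ∫ x in (0:ℝ)..t, f x = ∫ x in t..1, f x :=
      intervalIntegral.integral_interval_sub_left
        (hintf 0 1 ⟨le_rfl, zero_le_one⟩ ⟨zero_le_one, le_rfl⟩)
        (hintf 0 t ⟨le_rfl, zero_le_one⟩ ht)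
    have hnn : 0 ≤ ∫ x in t..1, f x :=
      intervalIntegral.integral_nonneg ht.2 (fun u hu => (hf_pos u ⟨ht.1.trans hu.1, hu.2⟩).le)
    rw [hF t, ← hf_int]
    linarith [hs ▸ hnn]
  have hHbd : ∀ t ∈ Set.Icc (0:ℝ) 1, ‖F t ^ (J - 1)‖ ≤ 1 := by
    intro t ht
    rw [Real.norm_eq_abs, abs_of_nonneg (pow_nonneg (hF_nonneg t ht) _)]
    exact pow_le_one₀ (hF_nonneg t ht) (hF_le1 t ht)
  have hintH : ∀ a b : ℝ, a ∈ Set.Icc (0:ℝ) 1 → b ∈ Set.Icc (0:ℝ) 1 →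
      IntervalIntegrable (fun t => F t ^ (J - 1)) volume a b := fun a b ha hb =>
    (hHcont.mono (hsub a b ha hb)).intervalIntegrable
  -- the primitive P
  set P : ℝ → ℝ := fun x => ∫ t in (0:ℝ)..x, F t ^ (J - 1) with hPdef
  have hPc : ContinuousOn P (Set.Icc 0 1) := by
    have := intervalIntegral.continuousOn_primitive_interval (a := (0:ℝ)) (b := 1)
      (μ := volume) (f := fun t => F t ^ (J - 1)) (by rw [h01]; exact hHcont.integrableOn_Icc)
    rwa [h01] at this
  have hPd : ∀ x ∈ Set.Ioo (0:ℝ) 1, HasDerivAt P (F x ^ (J - 1)) x := by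
    intro x hx
    exact intervalIntegral.integral_hasDerivAt_right
      (hintH 0 x ⟨le_rfl, zero_le_one⟩ ⟨hx.1.le, hx.2.le⟩)
      (ContinuousOn.stronglyMeasurableAtFilter isOpen_Ioo
        (hHcont.mono Set.Ioo_subset_Icc_self) x hx)
      (hHcont.continuousAt (Icc_mem_nhds hx.1 hx.2))
  set Φ : ℝ → ℝ → ℝ := fun q v => ∫ t in (max 0 (v - q))..v, F t ^ (J - 1) with hPhidef
  have hmaxmem : ∀ q : ℝ, 0 ≤ q → ∀ v ∈ Set.Icc (0:ℝ) 1,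
      max 0 (v - q) ∈ Set.Icc (0:ℝ) 1 := by
    intro q hq v hv
    exact ⟨le_max_left _ _, (max_le hv.1 (by linarith [hv.2])).trans hv.2⟩
  have hPhi_eq : ∀ q : ℝ, 0 ≤ q → ∀ v ∈ Set.Icc (0:ℝ) 1,
      Φ q v = P v - P (max 0 (v - q)) := by
    intro q hq v hv
    have := intervalIntegral.integral_interval_sub_left
      (hintH 0 v ⟨le_rfl, zero_le_one⟩ hv)
      (hintH 0 (max 0 (v - q)) ⟨le_rfl, zero_le_one⟩ (hmaxmem q hq v hv))
    exact this.symm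
  have hmaxcont : ∀ q : ℝ, Continuous fun v : ℝ => max 0 (v - q) :=
    fun q => continuous_const.max (continuous_id.sub continuous_const)
  have hPhiCont : ∀ q : ℝ, 0 ≤ q → ContinuousOn (fun v => Φ q v * f v) (Set.Icc 0 1) := by
    intro q hq
    have hcomp : ContinuousOn (fun v => P (max 0 (v - q))) (Set.Icc 0 1) :=
      hPc.comp (hmaxcont q).continuousOn (fun v hv => hmaxmem q hq v hv)
    have : ContinuousOn (fun v => (P v - P (max 0 (v - q))) * f v) (Set.Icc 0 1) :=
      (hPc.sub hcomp).mul hf_cont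
    exact this.congr (fun v hv => by rw [hPhi_eq q hq v hv])
  -- derivative of the nice representation
  set ψ : ℝ → ℝ := fun v => F (max (v - p) 0) ^ (J - 1) * f v with hψdef
  have hψcont : ContinuousOn ψ (Set.Icc 0 1) := by
    have hmc : Continuous fun v : ℝ => max (v - p) 0 :=
      (continuous_id.sub continuous_const).max continuous_const
    have hmem' : ∀ v ∈ Set.Icc (0:ℝ) 1, max (v - p) 0 ∈ Set.Icc (0:ℝ) 1 := by
      intro v hv
      exact ⟨le_max_right _ _, max_le (by linarith [hv.2]) zero_le_one⟩
    exact (((hFc.comp hmc.continuousOn hmem').pow _).mul hf_cont)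
  have hIuIoc : Set.uIoc (0:ℝ) 1 = Set.Ioc 0 1 := Set.uIoc_of_le zero_le_one
  have key : HasDerivAt (fun q : ℝ => ∫ v in (0:ℝ)..1, Φ q v * f v)
      (∫ v in (0:ℝ)..1, ψ v) p := by
    have main := (intervalIntegral.hasDerivAt_integral_of_dominated_loc_of_lip
      (F := fun q v => Φ q v * f v) (F' := ψ) (x₀ := p) (a := (0:ℝ)) (b := 1)
      (bound := fun v => |f v|) (s := Metric.ball p p) (μ := volume) (Metric.ball_mem_nhds p hp0)
      ?_ ?_ ?_ ?_ ?_ ?_).2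
    · exact main
    · -- measurability for q near p
      filter_upwards [Ioi_mem_nhds hp0] with q hq
      exact ((hPhiCont q (le_of_lt hq)).mono
        (by rw [hIuIoc]; exact Set.Ioc_subset_Icc_self)).aestronglyMeasurable
        measurableSet_uIoc
    · -- integrability at p
      exact ((hPhiCont p hp0.le).mono (by rw [h01])).intervalIntegrable
    · -- measurability of ψ
      exact ((hψcont).mono (by rw [hIuIoc]; exact Set.Ioc_subset_Icc_self)).aestronglyMeasurable
        measurableSet_uIoc
    · -- Lipschitz
      refine Filter.Eventually.of_forall ?_
      intro v hv
      rw [hIuIoc] at hv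
      have hvIcc : v ∈ Set.Icc (0:ℝ) 1 := ⟨hv.1.le, hv.2⟩
      rw [lipschitzOnWith_iff_dist_le_mul]
      intro q1 hq1 q2 hq2
      have hq1p : 0 < q1 := by
        have := Metric.mem_ball.1 hq1; rw [Real.dist_eq] at this
        have := abs_lt.1 this; linarith [this.1]
      have hq2p : 0 < q2 := by
        have := Metric.mem_ball.1 hq2; rw [Real.dist_eq] at this
        have := abs_lt.1 this; linarith [this.1]
      have hc1 := hmaxmem q1 hq1p.le v hvIcc
      have hc2 := hmaxmem q2 hq2p.le v hvIcc
      have hdiff : Φ q1 v - Φ q2 v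
          = ∫ t in (max 0 (v - q1))..(max 0 (v - q2)), F t ^ (J - 1) := by
        rw [hPhi_eq q1 hq1p.le v hvIcc, hPhi_eq q2 hq2p.le v hvIcc]
        have := intervalIntegral.integral_interval_sub_left
          (hintH 0 (max 0 (v - q2)) ⟨le_rfl, zero_le_one⟩ hc2)
          (hintH 0 (max 0 (v - q1)) ⟨le_rfl, zero_le_one⟩ hc1)
        rw [← this]; ring
      have hbd : |Φ q1 v - Φ q2 v| ≤ |q1 - q2| := by
        rw [hdiff]
        have hb : ∀ t ∈ Set.uIoc (max 0 (v - q1)) (max 0 (v - q2)), ‖F t ^ (J - 1)‖ ≤ 1 := by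
          intro t ht
          have : t ∈ Set.uIcc (max 0 (v - q1)) (max 0 (v - q2)) := Set.uIoc_subset_uIcc ht
          exact hHbd t (Set.uIcc_subset_Icc hc1 hc2 this)
        calc |∫ t in (max 0 (v - q1))..(max 0 (v - q2)), F t ^ (J - 1)|
            ≤ 1 * |max 0 (v - q2) - max 0 (v - q1)| :=
              intervalIntegral.norm_integral_le_of_norm_le_const hb
          _ = |max (v - q2) 0 - max (v - q1) 0| := by rw [one_mul, max_comm 0, max_comm 0]
          _ ≤ |(v - q2) - (v - q1)| := abs_max_sub_max_le_abs _ _ _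
          _ = |q1 - q2| := by rw [show v - q2 - (v - q1) = q1 - q2 by ring]
      rw [Real.dist_eq, Real.dist_eq]
      have : Φ q1 v * f v - Φ q2 v * f v = (Φ q1 v - Φ q2 v) * f v := by ring
      rw [this, abs_mul]
      have hnn : (Real.nnabs (|f v|) : ℝ) = |f v| := by
        rw [Real.coe_nnabs, abs_abs]
      rw [hnn]
      calc |Φ q1 v - Φ q2 v| * |f v| ≤ |q1 - q2| * |f v| :=
            mul_le_mul_of_nonneg_right hbd (abs_nonneg _)
        _ = |f v| * |q1 - q2| := by ring
    · -- bound integrable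
      exact ((hf_cont.abs).mono (by rw [h01])).intervalIntegrable
    · -- a.e. differentiability
      have hne : ∀ᵐ v : ℝ ∂volume, v ≠ p := by
        have : volume ({p} : Set ℝ) = 0 := measure_singleton p
        rw [ae_iff]
        simp [this]
      filter_upwards [hne] with v hvne hv
      rw [hIuIoc] at hv
      have hvIcc : v ∈ Set.Icc (0:ℝ) 1 := ⟨hv.1.le, hv.2⟩
      rcases lt_or_gt_of_ne hvne with hvp | hvp
      · -- v < p : locally constant
        have hψ0 : ψ v = 0 := by
          have : max (v - p) 0 = 0 := max_eq_right (by linarith)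
          rw [hψdef]
          simp only [this, hF0]
          rw [zero_pow (by omega), zero_mul]
        rw [hψ0]
        have hconst : (fun q => Φ q v * f v) =ᶠ[nhds p] fun _ => P v * f v := by
          filter_upwards [Ioi_mem_nhds hvp] with q hq
          have : max 0 (v - q) = 0 := max_eq_left (by simp at hq; linarith)
          simp only [hPhidef, this]
          rfl
        exact (hasDerivAt_const p (P v * f v)).congr_of_eventuallyEq hconst
      · -- v > p
        have hvp1 : v - p ∈ Set.Ioo (0:ℝ) 1 := ⟨by linarith, by linarith [hv.2]⟩
        have hPd' : HasDerivAt P (F (v - p) ^ (J - 1)) (v - p) := hPd _ hvp1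
        have hinner : HasDerivAt (fun q : ℝ => v - q) (-1) p := by
          simpa using (hasDerivAt_id p).const_sub v
        have hcomp : HasDerivAt (fun q : ℝ => P (v - q)) (F (v - p) ^ (J - 1) * (-1)) p :=
          HasDerivAt.comp p hPd' hinner
        have hd : HasDerivAt (fun q : ℝ => (P v - P (v - q)) * f v)
            (F (v - p) ^ (J - 1) * f v) p := by
          have := (hcomp.const_sub (P v)).mul_const (f v)
          have he : -(F (v - p) ^ (J - 1) * (-1)) * f v = F (v - p) ^ (J - 1) * f v := by ring
          rwa [he] at this
        have hψv : ψ v = F (v - p) ^ (J - 1) * f v := by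
          rw [hψdef]
          simp only [max_eq_left (by linarith : (0:ℝ) ≤ v - p)]
        rw [hψv]
        apply hd.congr_of_eventuallyEq
        filter_upwards [Ioo_mem_nhds hp0 hvp] with q hq
        have hmax : max 0 (v - q) = v - q := max_eq_right (by linarith [hq.2])
        rw [hPhi_eq q hq.1.le v hvIcc, hmax]
  -- rewrite the derivative value
  have hval : (∫ v in (0:ℝ)..1, ψ v) = ∫ v in p..1, F (v - p) ^ (J - 1) * f v := by
    have hint1 : IntervalIntegrable ψ volume 0 p :=
      (hψcont.mono (hsub 0 p ⟨le_rfl, zero_le_one⟩ ⟨hp0.le, hp1.le⟩)).intervalIntegrable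
    have hint2 : IntervalIntegrable ψ volume p 1 :=
      (hψcont.mono (hsub p 1 ⟨hp0.le, hp1.le⟩ ⟨zero_le_one, le_rfl⟩)).intervalIntegrable
    rw [← intervalIntegral.integral_add_adjacent_intervals hint1 hint2]
    have hz : ∫ v in (0:ℝ)..p, ψ v = 0 := by
      have : ∀ v ∈ Set.uIcc (0:ℝ) p, ψ v = 0 := by
        intro v hv
        rw [Set.uIcc_of_le hp0.le] at hv
        have : max (v - p) 0 = 0 := max_eq_right (by linarith [hv.2])
        rw [hψdef]
        simp only [this, hF0]
        rw [zero_pow (by omega), zero_mul]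
      rw [intervalIntegral.integral_congr this, intervalIntegral.integral_zero]
    have hcg : ∫ v in p..1, ψ v = ∫ v in p..1, F (v - p) ^ (J - 1) * f v := by
      apply intervalIntegral.integral_congr
      intro v hv
      rw [Set.uIcc_of_le hp1.le] at hv
      rw [hψdef]
      simp only [max_eq_left (by linarith [hv.1] : (0:ℝ) ≤ v - p)]
    rw [hz, zero_add, hcg]
  rw [hval] at key
  -- transfer along eventual equality
  apply key.congr_of_eventuallyEq
  filter_upwards [Ioo_mem_nhds hp0 hp1] with q hq
  apply intervalIntegral.integral_congr
  intro v hv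
  rw [h01] at hv
  have := inner_eq F h (J - 1) hJ1 hFc hF0 hhc hHd hv hq.1
  show (∫ v' in (0:ℝ)..v, min (v - v') q * h v') * f v = Φ q v * f v
  rw [this]
end

section
/- Assume regularity condition (H). Then there exists a unique p_B ∈ (0,1) satisfying D_B(p_B) = 0, i.e., satisfying the implicit equation p_B·f(p_B) = 1 − F(p_B) + (λ·J/(1−λ))·∫_{p_B}^1 F(v − p_B)^{J−1} f(v) dv. (This p_B is the posted price in the unique symmetric data-augmented bidding equilibrium.) -/
/-!
Write `D_B(p) = (1 - λ) h(p) + λ J G(p)` with `h(p) = 1 - F(p) - p f(p)` and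
`G(p) = ∫_p^1 F(v - p)^(J-1) f(v) dv`. By (H) `h` is antitone, and `G` is strictly decreasing
because raising the reserve `p` both shrinks the range of integration and lowers `F(v - p)`;
hence `D_B` is strictly decreasing on `[0, 1]`. Since `D_B(0) = 1 - λ + λ J G(0) > 0` and
`D_B(1) = -(1 - λ) f(1) < 0`, the intermediate value theorem gives exactly one zero in `(0, 1)`.
-/

open Set MeasureTheory intervalIntegral

theorem strictMonoOn_primitive_of_pos {f : ℝ → ℝ} {a b : ℝ} (hf : ContinuousOn f (Icc a b))
    (hpos : ∀ x ∈ Ioo a b, 0 < f x) :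
    StrictMonoOn (fun x => ∫ t in a..x, f t) (Icc a b) := by
  intro x hx y hy hxy
  have hint : ∀ {u w}, u ∈ Icc a b → w ∈ Icc a b → IntervalIntegrable f volume u w :=
    fun hu hw => (hf.mono (uIcc_subset_Icc hu hw)).intervalIntegrable
  have hgap : 0 < ∫ t in x..y, f t :=
    intervalIntegral_pos_of_pos_on (hint hx hy)
      (fun t ht => hpos t ⟨hx.1.trans_lt ht.1, ht.2.trans_le hy.2⟩) hxy
  have ha : a ∈ Icc a b := left_mem_Icc.2 (hx.1.trans hx.2)
  simp only
  rw [← integral_add_adjacent_intervals (hint ha hx) (hint hx hy)]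
  linarith

theorem ContinuousOn.exists_continuous_eqOn_Icc {f : ℝ → ℝ} {a b : ℝ} (hab : a ≤ b)
    (hf : ContinuousOn f (Icc a b)) : ∃ g : ℝ → ℝ, Continuous g ∧ EqOn g f (Icc a b) :=
  ⟨IccExtend hab ((Icc a b).domRestrict f), hf.domRestrict.Icc_extend',
    fun _ hx => IccExtend_of_mem hab _ hx⟩

section Bidding

variable {f F : ℝ → ℝ}

noncomputable def auctionTerm (f F : ℝ → ℝ) (n : ℕ) (p : ℝ) : ℝ :=
  ∫ v in p..1, F (v - p) ^ n * f v

noncomputable def biddingDemand (f F : ℝ → ℝ) (J : ℕ) (lam p : ℝ) : ℝ :=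
  (1 - lam) * (1 - F p - p * f p) + lam * J * auctionTerm f F (J - 1) p

theorem auctionTerm_congr {g Φ : ℝ → ℝ} (hf : EqOn f g (Icc 0 1)) (hF : EqOn F Φ (Icc 0 1))
    (n : ℕ) {p : ℝ} (hp : p ∈ Icc 0 1) : auctionTerm f F n p = auctionTerm g Φ n p := by
  refine integral_congr fun v hv => ?_
  rw [uIcc_of_le hp.2] at hv
  rw [hf ⟨hp.1.trans hv.1, hv.2⟩, hF ⟨by linarith [hv.1], by linarith [hv.2, hp.1]⟩]

theorem continuous_auctionTerm (hf : Continuous f) (hF : Continuous F) (n : ℕ) :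
    Continuous (auctionTerm f F n) := by
  have h : Continuous fun p => ∫ v in (1 : ℝ)..p, F (v - p) ^ n * f v := by fun_prop
  exact h.neg.congr fun p => (integral_symm 1 p).symm

theorem continuousOn_auctionTerm (hf : ContinuousOn f (Icc 0 1)) (hF : ContinuousOn F (Icc 0 1))
    (n : ℕ) : ContinuousOn (auctionTerm f F n) (Icc 0 1) := by
  obtain ⟨g, hg, hgf⟩ := hf.exists_continuous_eqOn_Icc zero_le_one
  obtain ⟨Φ, hΦ, hΦF⟩ := hF.exists_continuous_eqOn_Icc zero_le_one
  exact (continuous_auctionTerm hg hΦ n).continuousOn.congr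
    fun p hp => auctionTerm_congr hgf.symm hΦF.symm n hp

theorem continuousOn_auctionIntegrand (hf : ContinuousOn f (Icc 0 1))
    (hF : ContinuousOn F (Icc 0 1)) (n : ℕ) {p : ℝ} (hp : p ∈ Icc 0 1) :
    ContinuousOn (fun v => F (v - p) ^ n * f v) (Icc p 1) :=
  ((hF.comp (continuous_sub_right p).continuousOn
    fun v hv => ⟨by linarith [hv.1], by linarith [hv.2, hp.1]⟩).pow n).mul
    (hf.mono (Icc_subset_Icc hp.1 le_rfl))

theorem auctionTerm_strictAntiOn (hf : ContinuousOn f (Icc 0 1)) (hF : ContinuousOn F (Icc 0 1))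
    (hFmono : StrictMonoOn F (Icc 0 1)) (hF0 : 0 ≤ F 0) (hfpos : ∀ x ∈ Icc (0 : ℝ) 1, 0 < f x)
    (n : ℕ) : StrictAntiOn (auctionTerm f F n) (Icc 0 1) := by
  have hint : ∀ {r a b : ℝ}, r ∈ Icc 0 1 → a ∈ Icc r 1 → b ∈ Icc r 1 →
      IntervalIntegrable (fun v => F (v - r) ^ n * f v) volume a b := fun hr ha hb =>
    ((continuousOn_auctionIntegrand hf hF n hr).mono (uIcc_subset_Icc ha hb)).intervalIntegrable
  have h0 : (0 : ℝ) ∈ Icc 0 1 := left_mem_Icc.2 zero_le_one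
  intro p hp q hq hpq
  have hq' : q ∈ Icc p 1 := ⟨hpq.le, hq.2⟩
  have hhead : 0 < ∫ v in p..q, F (v - p) ^ n * f v := by
    refine intervalIntegral_pos_of_pos_on (hint hp (left_mem_Icc.2 hp.2) hq') (fun v hv => ?_) hpq
    have hvp : v - p ∈ Icc 0 1 := ⟨by linarith [hv.1], by linarith [hv.2, hq.2, hp.1]⟩
    have hFv : 0 < F (v - p) := hF0.trans_lt (hFmono h0 hvp (by linarith [hv.1]))
    exact mul_pos (pow_pos hFv n) (hfpos v ⟨hp.1.trans hv.1.le, hv.2.le.trans hq.2⟩)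
  have htail : ∫ v in q..1, F (v - q) ^ n * f v ≤ ∫ v in q..1, F (v - p) ^ n * f v := by
    refine integral_mono_on hq.2 (hint hq (left_mem_Icc.2 hq.2) (right_mem_Icc.2 hq.2))
      (hint hp hq' (right_mem_Icc.2 hp.2)) fun v hv => ?_
    have hvq : v - q ∈ Icc 0 1 := ⟨by linarith [hv.1], by linarith [hv.2, hq.1]⟩
    have hvp : v - p ∈ Icc 0 1 := ⟨by linarith [hv.1], by linarith [hv.2, hp.1]⟩
    have hFle : F (v - q) ≤ F (v - p) := hFmono.monotoneOn hvq hvp (by linarith)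
    have hFnonneg : 0 ≤ F (v - q) := hF0.trans (hFmono.monotoneOn h0 hvq hvq.1)
    exact mul_le_mul_of_nonneg_right (pow_le_pow_left₀ hFnonneg hFle n)
      (hfpos v ⟨hq.1.trans hv.1, hv.2⟩).le
  rw [auctionTerm, auctionTerm,
    ← integral_add_adjacent_intervals (hint hp (left_mem_Icc.2 hp.2) hq')
      (hint hp hq' (right_mem_Icc.2 hp.2))]
  linarith

theorem continuousOn_biddingDemand (hf : ContinuousOn f (Icc 0 1))
    (hF : ContinuousOn F (Icc 0 1)) (J : ℕ) (lam : ℝ) :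
    ContinuousOn (biddingDemand f F J lam) (Icc 0 1) :=
  (continuousOn_const.mul ((continuousOn_const.sub hF).sub (continuousOn_id.mul hf))).add
    (continuousOn_const.mul (continuousOn_auctionTerm hf hF (J - 1)))

theorem biddingDemand_strictAntiOn {J : ℕ} {lam : ℝ} (hJ : 0 < J) (hlam : lam ∈ Ioo (0 : ℝ) 1)
    (hreg : AntitoneOn (fun p : ℝ => 1 - F p - p * f p) (Icc 0 1))
    (hG : StrictAntiOn (auctionTerm f F (J - 1)) (Icc 0 1)) :
    StrictAntiOn (biddingDemand f F J lam) (Icc 0 1) := by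
  intro p hp q hq hpq
  have hcoeff : 0 < lam * J := mul_pos hlam.1 (Nat.cast_pos.2 hJ)
  exact add_lt_add_of_le_of_lt
    (mul_le_mul_of_nonneg_left (hreg hp hq hpq.le) (sub_nonneg.2 hlam.2.le))
    (mul_lt_mul_of_pos_left (hG hp hq hpq) hcoeff)

end Bidding

theorem existsUnique_mem_Ioo_eq_zero_of_strictAntiOn {D : ℝ → ℝ} {a b : ℝ} (hab : a ≤ b)
    (hcont : ContinuousOn D (Icc a b)) (hanti : StrictAntiOn D (Icc a b))
    (ha : 0 < D a) (hb : D b < 0) : ∃! p, p ∈ Ioo a b ∧ D p = 0 := by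
  obtain ⟨p, hp, hDp⟩ := intermediate_value_Ioo' hab hcont ⟨hb, ha⟩
  refine ⟨p, ⟨hp, hDp⟩, fun q ⟨hq, hDq⟩ => ?_⟩
  exact hanti.injOn (Ioo_subset_Icc_self hq) (Ioo_subset_Icc_self hp) (hDq.trans hDp.symm)

theorem bidding_equilibrium_price_exists_unique_general
    (f F : ℝ → ℝ)
    (hf_cont : ContinuousOn f (Set.Icc 0 1))
    (hf_pos : ∀ x ∈ Set.Icc (0:ℝ) 1, 0 < f x)
    (hf_int : (∫ t in (0:ℝ)..1, f t) = 1)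
    (hF : ∀ x, F x = ∫ t in (0:ℝ)..x, f t)
    (J : ℕ) (hJ : 2 ≤ J)
    (lam : ℝ) (hlam : lam ∈ Set.Ioo (0:ℝ) 1)
    (hreg : AntitoneOn (fun p : ℝ => 1 - F p - p * f p) (Set.Icc 0 1)) :
    ∃! pB : ℝ, pB ∈ Set.Ioo (0:ℝ) 1 ∧
      (1 - lam) * (1 - F pB - pB * f pB)
        + lam * (J : ℝ) * (∫ v in pB..1, F (v - pB) ^ (J - 1) * f v) = 0 := by
  have hF_eq : F = fun x => ∫ t in (0 : ℝ)..x, f t := funext hF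
  have hFc : ContinuousOn F (Icc 0 1) := by
    have huIcc : uIcc (0 : ℝ) 1 = Icc 0 1 := uIcc_of_le zero_le_one
    rw [hF_eq, ← huIcc]
    exact continuousOn_primitive_interval (huIcc ▸ hf_cont.integrableOn_Icc)
  have hFmono : StrictMonoOn F (Icc 0 1) :=
    hF_eq ▸ strictMonoOn_primitive_of_pos hf_cont fun x hx => hf_pos x (Ioo_subset_Icc_self hx)
  have hF0 : F 0 = 0 := by simp [hF]
  have hG := auctionTerm_strictAntiOn hf_cont hFc hFmono hF0.ge hf_pos (J - 1)
  have hG0 : 0 < auctionTerm f F (J - 1) 0 := by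
    simpa [auctionTerm] using hG (left_mem_Icc.2 zero_le_one) (right_mem_Icc.2 zero_le_one) one_pos
  have hD0 : 0 < biddingDemand f F J lam 0 := by
    have : 0 < lam * J := mul_pos hlam.1 (by positivity)
    simp only [biddingDemand, hF0]
    nlinarith [hlam.2]
  have hD1 : biddingDemand f F J lam 1 < 0 := by
    have hf1 := hf_pos 1 (right_mem_Icc.2 zero_le_one)
    simp only [biddingDemand, auctionTerm, integral_same, hF, hf_int]
    nlinarith [hlam.2]
  exact existsUnique_mem_Ioo_eq_zero_of_strictAntiOn zero_le_one
    (continuousOn_biddingDemand hf_cont hFc J lam)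
    (biddingDemand_strictAntiOn (by omega) hlam hreg hG) hD0 hD1

/-- Under regularity condition (H), there exists a unique
p_B ∈ (0,1) solving the bidding first-order condition; this is the posted
price in the unique symmetric data-augmented bidding equilibrium. -/
theorem bidding_equilibrium_price_exists_unique
    (f F : ℝ → ℝ)
    (hf_cont : ContinuousOn f (Set.Icc 0 1))
    (hf_pos : ∀ x ∈ Set.Icc (0:ℝ) 1, 0 < f x)
    (hf_logconcave : ConcaveOn ℝ (Set.Icc 0 1) (Real.log ∘ f))
    (hf_int : (∫ t in (0:ℝ)..1, f t) = 1)
    (hF : ∀ x, F x = ∫ t in (0:ℝ)..x, f t)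
    (J : ℕ) (hJ : 2 ≤ J)
    (lam : ℝ) (hlam : lam ∈ Set.Ioo (0:ℝ) 1)
    (hreg : AntitoneOn (fun p : ℝ => 1 - F p - p * f p) (Set.Icc 0 1)) :
    ∃! pB : ℝ, pB ∈ Set.Ioo (0:ℝ) 1 ∧
      (1 - lam) * (1 - F pB - pB * f pB)
        + lam * (J : ℝ) * (∫ v in pB..1, F (v - pB) ^ (J - 1) * f v) = 0 :=
  bidding_equilibrium_price_exists_unique_general f F hf_cont hf_pos hf_int hF J hJ lam hlam hreg
end

section
/- Let p_M ∈ (0,1) satisfy 1 − F(p_M) = p_M·f(p_M) and let p_B ∈ (0,1) satisfy D_B(p_B) = 0. Then p_B ≥ p_M. Consequently, off-platform consumer surplus and off-platform welfare are weakly lower in the presence of the platform: ∫_{p_B}^1 (v − p_B) f(v) dv ≤ ∫_{p_M}^1 (v − p_M) f(v) dv and ∫_{p_B}^1 v f(v) dv ≤ ∫_{p_M}^1 v f(v) dv. -/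
/-!
Log-concavity of `f` makes `f a * f d ≤ f b * f c` whenever `b, c` lie between `a ≤ d` with
`a + d = b + c`; integrating this over the upper tail gives the increasing hazard rate
`f x * (1 - F y) ≤ f y * (1 - F x)` for `x ≤ y`. The bidding term of `D_B` is nonnegative, so the
marginal revenue `1 - F p - p f p` is nonpositive at `p_B` while it vanishes at `p_M`; an
increasing hazard rate then forces `p_M ≤ p_B`. Both surplus comparisons follow because the
integrands are nonnegative and shrink as the price rises.
-/

open intervalIntegral Set MeasureTheory

theorem ConcaveOn.add_le_add_of_add_eq {g : ℝ → ℝ} {s : Set ℝ} (hg : ConcaveOn ℝ s g)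
    {a b c d : ℝ} (ha : a ∈ s) (hd : d ∈ s) (hab : a ≤ b) (hbd : b ≤ d)
    (hsum : a + d = b + c) : g a + g d ≤ g b + g c := by
  rcases (hab.trans hbd).eq_or_lt with had | had
  · obtain rfl : b = a := by linarith
    obtain rfl : c = d := by linarith
    rfl
  -- `b` and `c` are the convex combinations of `a, d` with swapped weights `θ, 1 - θ`.
  set θ := (d - b) / (d - a)
  have hda : 0 < d - a := by linarith
  have hθ0 : 0 ≤ θ := div_nonneg (by linarith) hda.le
  have hθ1 : 0 ≤ 1 - θ := by
    rw [sub_nonneg, div_le_one hda]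
    linarith
  have hb : θ • a + (1 - θ) • d = b := by
    simp only [θ, smul_eq_mul]
    field_simp
    ring
  have hc : (1 - θ) • a + θ • d = c := by
    simp only [θ, smul_eq_mul]
    field_simp
    linear_combination (d - a) * hsum
  have hgb := hg.2 ha hd hθ0 hθ1 (by ring)
  have hgc := hg.2 ha hd hθ1 hθ0 (by ring)
  rw [hb] at hgb
  rw [hc] at hgc
  simp only [smul_eq_mul] at hgb hgc
  linarith

theorem mul_le_mul_of_concaveOn_log {f : ℝ → ℝ} {s : Set ℝ} (hpos : ∀ x ∈ s, 0 < f x)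
    (hf : ConcaveOn ℝ s (Real.log ∘ f)) {a b c d : ℝ} (ha : a ∈ s) (hb : b ∈ s) (hc : c ∈ s)
    (hd : d ∈ s) (hab : a ≤ b) (hbd : b ≤ d) (hsum : a + d = b + c) :
    f a * f d ≤ f b * f c := by
  have := hf.add_le_add_of_add_eq ha hd hab hbd hsum
  simp only [Function.comp_apply] at this
  have := hpos a ha; have := hpos b hb; have := hpos c hc; have := hpos d hd
  rwa [← Real.log_le_log_iff (by positivity) (by positivity), Real.log_mul (by positivity)
    (by positivity), Real.log_mul (by positivity) (by positivity)]

theorem mul_integral_le_mul_integral_of_concaveOn_log {f : ℝ → ℝ} {a b x y : ℝ}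
    (hcont : ContinuousOn f (Icc a b)) (hpos : ∀ t ∈ Icc a b, 0 < f t)
    (hf : ConcaveOn ℝ (Icc a b) (Real.log ∘ f)) (hax : a ≤ x) (hxy : x ≤ y) (hyb : y ≤ b) :
    f x * ∫ t in y..b, f t ≤ f y * ∫ t in x..b, f t := by
  have hshift : MapsTo (fun t => t - (y - x)) (Icc y b) (Icc a b) :=
    fun t ht => ⟨by linarith [ht.1], by linarith [ht.2]⟩
  have hpointwise : ∀ t ∈ Icc y b, f x * f t ≤ f y * f (t - (y - x)) := fun t ht =>
    mul_le_mul_of_concaveOn_log hpos hf ⟨hax, by linarith⟩ ⟨by linarith, hyb⟩ (hshift ht)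
      ⟨by linarith [ht.1], ht.2⟩ hxy ht.1 (by ring)
  have hf_nonneg : 0 ≤ᵐ[volume.restrict (Ioc x b)] f :=
    ae_restrict_of_forall_mem measurableSet_Ioc fun t ht =>
      (hpos t ⟨by linarith [ht.1], ht.2⟩).le
  calc f x * ∫ t in y..b, f t = ∫ t in y..b, f x * f t :=
        (intervalIntegral.integral_const_mul _ _).symm
    _ ≤ ∫ t in y..b, f y * f (t - (y - x)) := by
      refine integral_mono_on hyb ?_ ?_ hpointwise
      · exact (continuousOn_const.mul (hcont.mono (Icc_subset_Icc (by linarith) le_rfl))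
          ).intervalIntegrable_of_Icc hyb
      · exact (continuousOn_const.mul (hcont.comp (continuousOn_id.sub continuousOn_const) hshift)
          ).intervalIntegrable_of_Icc hyb
    _ = f y * ∫ t in x..b - (y - x), f t := by
      rw [intervalIntegral.integral_const_mul, integral_comp_sub_right, sub_sub_cancel]
    _ ≤ f y * ∫ t in x..b, f t := by
      refine mul_le_mul_of_nonneg_left ?_ (hpos y ⟨by linarith, hyb⟩).le
      exact integral_mono_interval le_rfl (by linarith) (by linarith) hf_nonneg
        ((hcont.mono (Icc_subset_Icc hax le_rfl)).intervalIntegrable_of_Icc (by linarith))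

theorem mul_one_sub_le_mul_one_sub_of_concaveOn_log {f F : ℝ → ℝ}
    (hcont : ContinuousOn f (Icc 0 1)) (hpos : ∀ t ∈ Icc (0:ℝ) 1, 0 < f t)
    (hf : ConcaveOn ℝ (Icc 0 1) (Real.log ∘ f)) (hint : ∫ t in (0:ℝ)..1, f t = 1)
    (hF : ∀ x, F x = ∫ t in (0:ℝ)..x, f t) {x y : ℝ} (hx : 0 ≤ x) (hxy : x ≤ y) (hy : y ≤ 1) :
    f x * (1 - F y) ≤ f y * (1 - F x) := by
  have hsurvival : ∀ z ∈ Icc (0:ℝ) 1, 1 - F z = ∫ t in z..1, f t := fun z hz => by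
    rw [hF, ← integral_interval_sub_left (hcont.intervalIntegrable_of_Icc zero_le_one)
      ((hcont.mono (Icc_subset_Icc le_rfl hz.2)).intervalIntegrable_of_Icc hz.1), hint]
  rw [hsurvival y ⟨hx.trans hxy, hy⟩, hsurvival x ⟨hx, hxy.trans hy⟩]
  exact mul_integral_le_mul_integral_of_concaveOn_log hcont hpos hf hx hxy hy

theorem le_of_hazard_le_of_revenue_stationary {f S : ℝ → ℝ} {pM pB : ℝ}
    (hazard : pB ≤ pM → f pB * S pM ≤ f pM * S pB) (hfM : 0 < f pM) (hfB : 0 < f pB)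
    (hM : S pM = pM * f pM) (hB : S pB ≤ pB * f pB) : pM ≤ pB := by
  by_contra! hlt
  have := hazard hlt.le
  rw [hM] at this
  nlinarith [mul_le_mul_of_nonneg_left hB hfM.le, mul_pos (mul_pos hfM hfB) (sub_pos.2 hlt)]

theorem integral_le_integral_of_le_left {g : ℝ → ℝ} {p q b : ℝ} (hpq : p ≤ q) (hqb : q ≤ b)
    (hg : ContinuousOn g (Icc p b)) (hg_nonneg : ∀ v ∈ Icc p b, 0 ≤ g v) :
    ∫ v in q..b, g v ≤ ∫ v in p..b, g v :=
  integral_mono_interval hpq hqb le_rfl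
    (ae_restrict_of_forall_mem measurableSet_Ioc fun v hv => hg_nonneg v (Ioc_subset_Icc_self hv))
    (hg.intervalIntegrable_of_Icc (hpq.trans hqb))

theorem integral_sub_mul_le_of_le {f : ℝ → ℝ} {p q b : ℝ} (hpq : p ≤ q) (hqb : q ≤ b)
    (hf : ContinuousOn f (Icc p b)) (hf_nonneg : ∀ v ∈ Icc p b, 0 ≤ f v) :
    ∫ v in q..b, (v - q) * f v ≤ ∫ v in p..b, (v - p) * f v := by
  have hcont : ∀ r, ContinuousOn (fun v => (v - r) * f v) (Icc p b) := fun r =>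
    (continuousOn_id.sub continuousOn_const).mul hf
  calc ∫ v in q..b, (v - q) * f v ≤ ∫ v in q..b, (v - p) * f v := by
        refine integral_mono_on hqb ?_ ?_ fun v hv =>
          mul_le_mul_of_nonneg_right (by linarith) (hf_nonneg v ⟨hpq.trans hv.1, hv.2⟩)
        all_goals exact ((hcont _).mono (Icc_subset_Icc hpq le_rfl)).intervalIntegrable_of_Icc hqb
    _ ≤ ∫ v in p..b, (v - p) * f v :=
        integral_le_integral_of_le_left hpq hqb (hcont p) fun v hv =>
          mul_nonneg (by linarith [hv.1]) (hf_nonneg v hv)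

theorem bidding_price_above_monopoly_general
    (f F : ℝ → ℝ)
    (hf_cont : ContinuousOn f (Set.Icc 0 1))
    (hf_pos : ∀ x ∈ Set.Icc (0:ℝ) 1, 0 < f x)
    (hf_logconcave : ConcaveOn ℝ (Set.Icc 0 1) (Real.log ∘ f))
    (hf_int : (∫ t in (0:ℝ)..1, f t) = 1)
    (hF : ∀ x, F x = ∫ t in (0:ℝ)..x, f t)
    (J : ℕ)
    (lam : ℝ) (hlam : lam ∈ Set.Ioo (0:ℝ) 1)
    (pM pB : ℝ) (hpM : pM ∈ Set.Ioo (0:ℝ) 1) (hpB : pB ∈ Set.Ioo (0:ℝ) 1)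
    (hM : 1 - F pM = pM * f pM)
    (hB : (1 - lam) * (1 - F pB - pB * f pB)
        + lam * (J : ℝ) * (∫ v in pB..1, F (v - pB) ^ (J - 1) * f v) = 0) :
    pM ≤ pB ∧
    (∫ v in pB..1, (v - pB) * f v) ≤ (∫ v in pM..1, (v - pM) * f v) ∧
    (∫ v in pB..1, v * f v) ≤ (∫ v in pM..1, v * f v) := by
  obtain ⟨hpM0, hpM1⟩ := hpM
  obtain ⟨hpB0, hpB1⟩ := hpB
  have hf_nonneg : ∀ x ∈ Icc (0:ℝ) 1, 0 ≤ f x := fun x hx => (hf_pos x hx).le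
  have hF_nonneg : ∀ x ∈ Icc (0:ℝ) 1, 0 ≤ F x := fun x hx => by
    rw [hF]
    exact integral_nonneg hx.1 fun t ht => hf_nonneg t ⟨ht.1, ht.2.trans hx.2⟩
  have hrevenue : 1 - F pB ≤ pB * f pB := by
    have hbidding : 0 ≤ ∫ v in pB..1, F (v - pB) ^ (J - 1) * f v :=
      integral_nonneg hpB1.le fun v hv => mul_nonneg
        (pow_nonneg (hF_nonneg _ ⟨by linarith [hv.1], by linarith [hv.2]⟩) _)
        (hf_nonneg v ⟨by linarith [hv.1], hv.2⟩)
    nlinarith [hlam.1, hlam.2, mul_nonneg (mul_nonneg hlam.1.le (Nat.cast_nonneg J)) hbidding]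
  have hMB : pM ≤ pB :=
    le_of_hazard_le_of_revenue_stationary (S := fun x => 1 - F x)
      (fun h => mul_one_sub_le_mul_one_sub_of_concaveOn_log hf_cont hf_pos hf_logconcave hf_int hF
        hpB0.le h hpM1.le)
      (hf_pos pM ⟨hpM0.le, hpM1.le⟩) (hf_pos pB ⟨hpB0.le, hpB1.le⟩) hM hrevenue
  have hf_cont' : ContinuousOn f (Icc pM 1) := hf_cont.mono (Icc_subset_Icc hpM0.le le_rfl)
  have hf_nonneg' : ∀ v ∈ Icc pM 1, 0 ≤ f v := fun v hv => hf_nonneg v ⟨by linarith [hv.1], hv.2⟩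
  exact ⟨hMB, integral_sub_mul_le_of_le hMB hpB1.le hf_cont' hf_nonneg',
    integral_le_integral_of_le_left hMB hpB1.le (continuousOn_id.mul hf_cont') fun v hv =>
      mul_nonneg (by linarith [hv.1]) (hf_nonneg' v hv)⟩

/-- The bidding-equilibrium posted price exceeds the stand-alone
monopoly price, hence off-platform consumer surplus and welfare are weakly
lower in the presence of the platform. -/
theorem bidding_price_above_monopoly
    (f F : ℝ → ℝ)
    (hf_cont : ContinuousOn f (Set.Icc 0 1))
    (hf_pos : ∀ x ∈ Set.Icc (0:ℝ) 1, 0 < f x)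
    (hf_logconcave : ConcaveOn ℝ (Set.Icc 0 1) (Real.log ∘ f))
    (hf_int : (∫ t in (0:ℝ)..1, f t) = 1)
    (hF : ∀ x, F x = ∫ t in (0:ℝ)..x, f t)
    (J : ℕ) (hJ : 2 ≤ J)
    (lam : ℝ) (hlam : lam ∈ Set.Ioo (0:ℝ) 1)
    (pM pB : ℝ) (hpM : pM ∈ Set.Ioo (0:ℝ) 1) (hpB : pB ∈ Set.Ioo (0:ℝ) 1)
    (hM : 1 - F pM = pM * f pM)
    (hB : (1 - lam) * (1 - F pB - pB * f pB)
        + lam * (J : ℝ) * (∫ v in pB..1, F (v - pB) ^ (J - 1) * f v) = 0) :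
    pM ≤ pB ∧
    (∫ v in pB..1, (v - pB) * f v) ≤ (∫ v in pM..1, (v - pM) * f v) ∧
    (∫ v in pB..1, v * f v) ≤ (∫ v in pM..1, v * f v) :=
  bidding_price_above_monopoly_general f F hf_cont hf_pos hf_logconcave hf_int hF J lam hlam pM pB
    hpM hpB hM hB
end

section
/- Assume regularity condition (H). Let 0 < λ₁ ≤ λ₂ < 1, and for i = 1,2 let p_i ∈ (0,1) satisfy (1−λ_i)·(1 − F(p_i) − p_i·f(p_i)) + λ_i·J·∫_{p_i}^1 F(v − p_i)^{J−1} f(v) dv = 0. Then p₁ ≤ p₂. (The equilibrium posted price under data-augmented bidding is increasing in the platform's market share λ.) -/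
open intervalIntegral Set

/-! Write `G p = 1 - F p - p * f p` and `I p = ∫ v in p..1, F (v - p) ^ (J - 1) * f v`.
By (H) `G` is antitone, and `I` is strictly decreasing because `F` is strictly increasing.
The condition at `λ₁` forces `G p₁ ≤ 0 ≤ I p₁`, so raising the weight to `λ₂` makes
`(1 - λ₂) G + λ₂ J I` nonnegative at `p₁`; as this function is strictly decreasing, its zero `p₂`
lies to the right of `p₁`. -/

theorem strictMonoOn_primitive {f : ℝ → ℝ} {a b : ℝ} (hf : ContinuousOn f (Icc a b))
    (hpos : ∀ x ∈ Icc a b, 0 < f x) :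
    StrictMonoOn (fun x => ∫ t in a..x, f t) (Icc a b) := by
  intro x hx y hy hxy
  have hint : ∀ u ∈ Icc a b, IntervalIntegrable f MeasureTheory.volume a u := fun u hu =>
    (hf.mono (uIcc_subset_Icc (left_mem_Icc.2 (hu.1.trans hu.2)) hu)).intervalIntegrable
  have : 0 < ∫ t in x..y, f t :=
    intervalIntegral_pos_of_pos_on ((hint x hx).symm.trans (hint y hy))
      (fun t ht => hpos t ⟨hx.1.trans ht.1.le, ht.2.le.trans hy.2⟩) hxy
  rw [← integral_interval_sub_left (hint y hy) (hint x hx)] at this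
  simpa using this

section ShiftedIntegral

variable {H w : ℝ → ℝ} {b : ℝ}

theorem integral_comp_sub_mul_nonneg (hH : ∀ x ∈ Icc 0 b, 0 ≤ H x)
    (hw : ∀ x ∈ Icc 0 b, 0 ≤ w x) {p r : ℝ} (hp : 0 ≤ p) (hpr : p ≤ r) (hr : r ≤ b) :
    0 ≤ ∫ v in p..r, H (v - p) * w v :=
  integral_nonneg hpr fun v hv =>
    mul_nonneg (hH _ ⟨by linarith [hv.1], by linarith [hv.2]⟩) (hw v ⟨hp.trans hv.1, hv.2.trans hr⟩)

theorem continuousOn_comp_sub_mul (hHc : ContinuousOn H (Icc 0 b))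
    (hwc : ContinuousOn w (Icc 0 b)) {r : ℝ} (hr : 0 ≤ r) :
    ContinuousOn (fun v => H (v - r) * w v) (Icc r b) :=
  (hHc.comp (continuous_sub_right r).continuousOn fun v hv =>
    ⟨sub_nonneg.2 hv.1, by linarith [hv.2]⟩).mul (hwc.mono (Icc_subset_Icc hr le_rfl))

theorem strictAntiOn_integral_comp_sub_mul (hHc : ContinuousOn H (Icc 0 b))
    (hH : StrictMonoOn H (Icc 0 b)) (hH₀ : ∀ x ∈ Icc 0 b, 0 ≤ H x)
    (hwc : ContinuousOn w (Icc 0 b)) (hw : ∀ x ∈ Icc 0 b, 0 ≤ w x) (hwb : 0 < w b) :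
    StrictAntiOn (fun p => ∫ v in p..b, H (v - p) * w v) (Ico 0 b) := by
  intro q hq p hp hqp
  have hcont := continuousOn_comp_sub_mul hHc hwc hq.1
  have hsplit : ∫ v in q..b, H (v - q) * w v =
      (∫ v in q..p, H (v - q) * w v) + ∫ v in p..b, H (v - q) * w v :=
    (integral_add_adjacent_intervals
      ((hcont.mono (Icc_subset_Icc le_rfl hp.2.le)).intervalIntegrable_of_Icc hqp.le)
      ((hcont.mono (Icc_subset_Icc hqp.le le_rfl)).intervalIntegrable_of_Icc hp.2.le)).symm
  have hlt : ∫ v in p..b, H (v - p) * w v < ∫ v in p..b, H (v - q) * w v := by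
    refine integral_lt_integral_of_continuousOn_of_le_of_exists_lt hp.2
      (continuousOn_comp_sub_mul hHc hwc hp.1)
      (hcont.mono (Icc_subset_Icc hqp.le le_rfl)) (fun v hv => ?_)
      ⟨b, right_mem_Icc.2 hp.2.le, mul_lt_mul_of_pos_right
        (hH ⟨by linarith [hp.2], by linarith [hp.1]⟩ ⟨by linarith [hq.2], by linarith [hq.1]⟩
          (by linarith)) hwb⟩
    exact mul_le_mul_of_nonneg_right
      (hH.monotoneOn ⟨by linarith [hv.1], by linarith [hv.2, hp.1]⟩
        ⟨by linarith [hv.1], by linarith [hv.2, hq.1]⟩ (by linarith))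
      (hw v ⟨hp.1.trans hv.1.le, hv.2⟩)
  have hfirst := integral_comp_sub_mul_nonneg hH₀ hw hq.1 hqp.le hp.2.le
  simp only
  linarith

end ShiftedIntegral

theorem le_of_weighted_sum_eq_zero {G I : ℝ → ℝ} {s : Set ℝ} {c lam₁ lam₂ p₁ p₂ : ℝ}
    (hG : AntitoneOn G s) (hI : StrictAntiOn I s) (hI₁ : 0 ≤ I p₁) (hc : 0 < c)
    (hlam₁ : 0 < lam₁) (hlam : lam₁ ≤ lam₂) (hlam₂ : lam₂ < 1) (hp₁ : p₁ ∈ s) (hp₂ : p₂ ∈ s)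
    (h₁ : (1 - lam₁) * G p₁ + lam₁ * c * I p₁ = 0)
    (h₂ : (1 - lam₂) * G p₂ + lam₂ * c * I p₂ = 0) :
    p₁ ≤ p₂ := by
  by_contra! h
  have hG₁ : G p₁ ≤ 0 := by
    by_contra! hpos
    have : 0 < (1 - lam₁) * G p₁ := mul_pos (by linarith) hpos
    have : 0 ≤ lam₁ * c * I p₁ := by positivity
    linarith
  have hshift : 0 ≤ (lam₂ - lam₁) * (c * I p₁ - G p₁) :=
    mul_nonneg (by linarith) (by nlinarith)
  refine lt_irrefl (0 : ℝ) ?_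
  calc (0 : ℝ) = (1 - lam₁) * G p₁ + lam₁ * c * I p₁ := h₁.symm
    _ ≤ (1 - lam₂) * G p₁ + lam₂ * c * I p₁ := by linarith
    _ < (1 - lam₂) * G p₂ + lam₂ * c * I p₂ :=
      add_lt_add_of_le_of_lt (mul_le_mul_of_nonneg_left (hG hp₂ hp₁ h.le) (by linarith))
        (mul_lt_mul_of_pos_left (hI hp₂ hp₁ h) (mul_pos (hlam₁.trans_le hlam) hc))
    _ = 0 := h₂

theorem bidding_price_monotone_in_lambda_general
    (f F : ℝ → ℝ)
    (hf_cont : ContinuousOn f (Set.Icc 0 1))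
    (hf_pos : ∀ x ∈ Set.Icc (0:ℝ) 1, 0 < f x)
    (hF : ∀ x, F x = ∫ t in (0:ℝ)..x, f t)
    (J : ℕ) (hJ : 2 ≤ J)
    (hreg : AntitoneOn (fun p : ℝ => 1 - F p - p * f p) (Set.Icc 0 1))
    (lam₁ lam₂ : ℝ) (hlam₁ : 0 < lam₁) (hlam₁₂ : lam₁ ≤ lam₂) (hlam₂ : lam₂ < 1)
    (p₁ p₂ : ℝ) (hp₁ : p₁ ∈ Set.Ioo (0:ℝ) 1) (hp₂ : p₂ ∈ Set.Ioo (0:ℝ) 1)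
    (h₁ : (1 - lam₁) * (1 - F p₁ - p₁ * f p₁)
        + lam₁ * (J : ℝ) * (∫ v in p₁..1, F (v - p₁) ^ (J - 1) * f v) = 0)
    (h₂ : (1 - lam₂) * (1 - F p₂ - p₂ * f p₂)
        + lam₂ * (J : ℝ) * (∫ v in p₂..1, F (v - p₂) ^ (J - 1) * f v) = 0) :
    p₁ ≤ p₂ := by
  obtain rfl : F = fun x => ∫ t in (0:ℝ)..x, f t := funext hF
  have hF_mono := strictMonoOn_primitive hf_cont hf_pos
  have hF_nonneg : ∀ x ∈ Icc (0:ℝ) 1, 0 ≤ ∫ t in (0:ℝ)..x, f t := fun x hx => by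
    simpa using hF_mono.monotoneOn (left_mem_Icc.2 zero_le_one) hx hx.1
  have hF_cont : ContinuousOn (fun x => ∫ t in (0:ℝ)..x, f t) (Icc 0 1) := by
    simpa using continuousOn_primitive_interval (a := 0) (b := 1)
      (by simpa using hf_cont.integrableOn_Icc)
  have hf_nonneg : ∀ x ∈ Icc (0:ℝ) 1, 0 ≤ f x := fun x hx => (hf_pos x hx).le
  have hI := strictAntiOn_integral_comp_sub_mul (hF_cont.pow (J - 1))
    ((pow_left_strictMonoOn₀ (by omega)).comp hF_mono hF_nonneg)
    (fun x hx => pow_nonneg (hF_nonneg x hx) _) hf_cont hf_nonneg (hf_pos 1 (by simp))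
  exact le_of_weighted_sum_eq_zero (hreg.mono Ioo_subset_Icc_self) (hI.mono Ioo_subset_Ico_self)
    (integral_comp_sub_mul_nonneg (fun x hx => pow_nonneg (hF_nonneg x hx) _) hf_nonneg
      hp₁.1.le hp₁.2.le le_rfl)
    (by exact_mod_cast (by omega : 0 < J)) hlam₁ hlam₁₂ hlam₂ hp₁ hp₂ h₁ h₂

/-- Under regularity condition (H), the equilibrium posted price
under data-augmented bidding is increasing in the platform's market share λ. -/
theorem bidding_price_monotone_in_lambda
    (f F : ℝ → ℝ)
    (hf_cont : ContinuousOn f (Set.Icc 0 1))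
    (hf_pos : ∀ x ∈ Set.Icc (0:ℝ) 1, 0 < f x)
    (hf_logconcave : ConcaveOn ℝ (Set.Icc 0 1) (Real.log ∘ f))
    (hf_int : (∫ t in (0:ℝ)..1, f t) = 1)
    (hF : ∀ x, F x = ∫ t in (0:ℝ)..x, f t)
    (J : ℕ) (hJ : 2 ≤ J)
    (hreg : AntitoneOn (fun p : ℝ => 1 - F p - p * f p) (Set.Icc 0 1))
    (lam₁ lam₂ : ℝ) (hlam₁ : 0 < lam₁) (hlam₁₂ : lam₁ ≤ lam₂) (hlam₂ : lam₂ < 1)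
    (p₁ p₂ : ℝ) (hp₁ : p₁ ∈ Set.Ioo (0:ℝ) 1) (hp₂ : p₂ ∈ Set.Ioo (0:ℝ) 1)
    (h₁ : (1 - lam₁) * (1 - F p₁ - p₁ * f p₁)
        + lam₁ * (J : ℝ) * (∫ v in p₁..1, F (v - p₁) ^ (J - 1) * f v) = 0)
    (h₂ : (1 - lam₂) * (1 - F p₂ - p₂ * f p₂)
        + lam₂ * (J : ℝ) * (∫ v in p₂..1, F (v - p₂) ^ (J - 1) * f v) = 0) :
    p₁ ≤ p₂ :=
  bidding_price_monotone_in_lambda_general f F hf_cont hf_pos hF J hJ hreg lam₁ lam₂ hlam₁ hlam₁₂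
    hlam₂ p₁ p₂ hp₁ hp₂ h₁ h₂
end

section
/- Let p_M ∈ (0,1) satisfy 1 − F(p_M) = p_M·f(p_M). Then the off-platform profit function p ↦ p·(1 − F(p)) is antitone (weakly decreasing) on [p_M, 1]. (Hence, since the equilibrium posted price exceeds p_M and increases in λ, expected off-platform firm profit per consumer is decreasing in the platform's market share.) -/
open intervalIntegral

/-- Concave functions have decreasing increments:
`g x + g (y + s) ≤ g y + g (x + s)` for `x ≤ y`, `0 ≤ s`. -/
lemma concave_incr_ineq {g : ℝ → ℝ} (hg : ConcaveOn ℝ (Set.Icc 0 1) g)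
    {x y s : ℝ} (hxy : x ≤ y) (hs : 0 ≤ s)
    (hx : x ∈ Set.Icc (0:ℝ) 1) (hys : y + s ∈ Set.Icc (0:ℝ) 1) :
    g x + g (y + s) ≤ g y + g (x + s) := by
  rcases eq_or_lt_of_le hs with rfl | hs'
  · simp only [add_zero]; linarith
  rcases eq_or_lt_of_le hxy with rfl | hxy'
  · linarith
  have hd : (0:ℝ) < y + s - x := by linarith
  set a : ℝ := (y - x) / (y + s - x) with ha_def
  set b : ℝ := s / (y + s - x) with hb_def
  have ha0 : 0 ≤ a := div_nonneg (by linarith) hd.le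
  have hb0 : 0 ≤ b := div_nonneg hs hd.le
  have hab : a + b = 1 := by
    rw [ha_def, hb_def, ← add_div]
    rw [show y - x + s = y + s - x by ring, div_self hd.ne']
  have h1a : (1 - a) ≥ 0 := by nlinarith
  have h1b : (1 - b) ≥ 0 := by nlinarith
  have hys' : y + s ∈ Set.Icc (0:ℝ) 1 := hys
  have hy_eq : (1 - a) * x + a * (y + s) = y := by
    rw [ha_def]; linear_combination div_mul_cancel₀ (y - x) hd.ne'
  have hxs_eq : (1 - b) * x + b * (y + s) = x + s := by
    rw [hb_def]; linear_combination div_mul_cancel₀ s hd.ne'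
  have h1 := hg.2 hx hys' h1a ha0 (by ring)
  have h2 := hg.2 hx hys' h1b hb0 (by ring)
  rw [smul_eq_mul, smul_eq_mul, smul_eq_mul, smul_eq_mul] at h1 h2
  rw [hy_eq] at h1
  rw [hxs_eq] at h2
  have hsum :
      (1 - a) * g x + a * g (y + s) + ((1 - b) * g x + b * g (y + s))
        = g x + g (y + s) := by
    have hb1 : b = 1 - a := by linarith
    rw [hb1]; ring
  linarith

/-- Log-concavity inequality on the density: `f x * f (y+s) ≤ f y * f (x+s)`. -/
lemma logconcave_mul_ineq {f : ℝ → ℝ}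
    (hf_pos : ∀ x ∈ Set.Icc (0:ℝ) 1, 0 < f x)
    (hf_logconcave : ConcaveOn ℝ (Set.Icc 0 1) (Real.log ∘ f))
    {x y s : ℝ} (hxy : x ≤ y) (hs : 0 ≤ s)
    (hx : x ∈ Set.Icc (0:ℝ) 1) (hys : y + s ∈ Set.Icc (0:ℝ) 1) :
    f x * f (y + s) ≤ f y * f (x + s) := by
  have hy : y ∈ Set.Icc (0:ℝ) 1 :=
    ⟨le_trans hx.1 hxy, by linarith [hys.2]⟩
  have hxs : x + s ∈ Set.Icc (0:ℝ) 1 :=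
    ⟨by linarith [hx.1], by linarith [hys.2]⟩
  have h := concave_incr_ineq hf_logconcave hxy hs hx hys
  simp only [Function.comp_apply] at h
  have hfx := hf_pos x hx
  have hfy := hf_pos y hy
  have hfys := hf_pos _ hys
  have hfxs := hf_pos _ hxs
  have h1 : Real.log (f x * f (y + s)) ≤ Real.log (f y * f (x + s)) := by
    rw [Real.log_mul hfx.ne' hfys.ne', Real.log_mul hfy.ne' hfxs.ne']
    exact h
  have := Real.exp_le_exp.2 h1
  rwa [Real.exp_log (by positivity), Real.exp_log (by positivity)] at this

/-- The off-platform profit function p ↦ p·(1 − F(p)) is weakly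
decreasing on [p_M, 1], where p_M is the stand-alone monopoly price. -/
theorem off_platform_profit_antitone_above_monopoly
    (f F : ℝ → ℝ)
    (hf_cont : ContinuousOn f (Set.Icc 0 1))
    (hf_pos : ∀ x ∈ Set.Icc (0:ℝ) 1, 0 < f x)
    (hf_logconcave : ConcaveOn ℝ (Set.Icc 0 1) (Real.log ∘ f))
    (hf_int : (∫ t in (0:ℝ)..1, f t) = 1)
    (hF : ∀ x, F x = ∫ t in (0:ℝ)..x, f t)
    (pM : ℝ) (hpM : pM ∈ Set.Ioo (0:ℝ) 1)
    (hM : 1 - F pM = pM * f pM) :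
    AntitoneOn (fun p : ℝ => p * (1 - F p)) (Set.Icc pM 1) := by
  obtain ⟨hpM0, hpM1⟩ := hpM
  -- interval integrability on any subinterval of [0,1]
  have hint : ∀ a b : ℝ, a ∈ Set.Icc (0:ℝ) 1 → b ∈ Set.Icc (0:ℝ) 1 →
      IntervalIntegrable f MeasureTheory.volume a b := by
    intro a b ha hb
    exact (hf_cont.mono (Set.uIcc_subset_Icc ha hb)).intervalIntegrable
  -- 1 - F x equals the tail integral, for x ∈ [0,1]
  have htail : ∀ x ∈ Set.Icc (0:ℝ) 1, 1 - F x = ∫ t in x..1, f t := by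
    intro x hx
    have hadd := intervalIntegral.integral_add_adjacent_intervals
      (hint 0 x (by simp) hx) (hint x 1 hx (by simp))
    rw [hF x]
    linarith
  -- key inequality: for x ∈ [pM, 1], 1 - F x ≤ pM * f x
  have hkey : ∀ x ∈ Set.Icc pM 1, 1 - F x ≤ pM * f x := by
    intro x hx
    obtain ⟨hx1, hx2⟩ := hx
    have hx01 : x ∈ Set.Icc (0:ℝ) 1 := ⟨by linarith, hx2⟩
    have hpM01 : pM ∈ Set.Icc (0:ℝ) 1 := ⟨hpM0.le, hpM1.le⟩
    set c : ℝ := x - pM with hc_def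
    have hc0 : 0 ≤ c := by simp [hc_def]; linarith
    have h1c : pM ≤ 1 - c := by simp [hc_def]; linarith
    have h1c01 : (1:ℝ) - c ∈ Set.Icc (0:ℝ) 1 := ⟨by linarith, by linarith⟩
    -- shift of variable
    have hshift : (∫ t in x..1, f t) = ∫ t in pM..(1 - c), f (t + c) := by
      rw [intervalIntegral.integral_comp_add_right (fun t => f t) c]
      norm_num [hc_def]
    -- integrability of the two integrands on [pM, 1-c]
    have huIcc : Set.uIcc pM (1 - c) = Set.Icc pM (1 - c) := Set.uIcc_of_le h1c
    have hint1 : IntervalIntegrable (fun t => f pM * f (t + c))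
        MeasureTheory.volume pM (1 - c) := by
      apply ContinuousOn.intervalIntegrable
      apply ContinuousOn.mul continuousOn_const
      apply (hf_cont.comp (continuous_add_right c).continuousOn)
      intro t ht
      rw [huIcc] at ht
      exact ⟨by simp; linarith [ht.1, hpM0.le], by simp; linarith [ht.2]⟩
    have hint2 : IntervalIntegrable (fun t => f t * f x)
        MeasureTheory.volume pM (1 - c) := by
      apply ContinuousOn.intervalIntegrable
      apply ContinuousOn.mul _ continuousOn_const
      apply hf_cont.mono
      rw [huIcc]
      exact Set.Icc_subset_Icc (by linarith) (by linarith)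
    -- pointwise comparison via log-concavity
    have hpt : ∀ t ∈ Set.Icc pM (1 - c), f pM * f (t + c) ≤ f t * f x := by
      intro t ht
      have h := logconcave_mul_ineq hf_pos hf_logconcave ht.1 hc0 hpM01
        (show t + c ∈ Set.Icc (0:ℝ) 1 from ⟨by linarith [ht.1, hpM0.le], by linarith [ht.2]⟩)
      have : pM + c = x := by simp [hc_def]
      rwa [this] at h
    have hmono : (∫ t in pM..(1 - c), f pM * f (t + c)) ≤
        ∫ t in pM..(1 - c), f t * f x :=
      intervalIntegral.integral_mono_on h1c hint1 hint2 hpt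
    -- assemble
    have e1 : (∫ t in pM..(1 - c), f pM * f (t + c)) = f pM * (1 - F x) := by
      rw [intervalIntegral.integral_const_mul, ← hshift, htail x hx01]
    have e2 : (∫ t in pM..(1 - c), f t * f x) ≤ f x * (pM * f pM) := by
      have : (∫ t in pM..(1 - c), f t * f x) = (∫ t in pM..(1 - c), f t) * f x := by
        rw [intervalIntegral.integral_mul_const]
      rw [this]
      have hle : (∫ t in pM..(1 - c), f t) ≤ ∫ t in pM..1, f t := by
        have hadj := intervalIntegral.integral_add_adjacent_intervals
          (hint pM (1 - c) hpM01 h1c01) (hint (1 - c) 1 h1c01 (by simp))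
        have hnn : 0 ≤ ∫ t in (1 - c)..1, f t := by
          apply intervalIntegral.integral_nonneg (by linarith)
          intro u hu
          exact (hf_pos u ⟨by linarith [hu.1], hu.2⟩).le
        linarith [hadj]
      have htpM : (∫ t in pM..1, f t) = pM * f pM := by
        rw [← htail pM hpM01]; exact hM
      have hfx := hf_pos x hx01
      calc (∫ t in pM..(1 - c), f t) * f x ≤ (∫ t in pM..1, f t) * f x := by
            apply mul_le_mul_of_nonneg_right hle hfx.le
        _ = f x * (pM * f pM) := by rw [htpM]; ring
    have hfpM := hf_pos pM hpM01
    nlinarith [hmono, e1, e2]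
  -- continuity of F on [0,1]
  have hFcont : ContinuousOn F (Set.Icc 0 1) := by
    have : ContinuousOn (fun x => ∫ t in (0:ℝ)..x, f t) (Set.uIcc 0 1) := by
      apply intervalIntegral.continuousOn_primitive_interval
      rw [Set.uIcc_of_le (by norm_num : (0:ℝ) ≤ 1)]
      exact hf_cont.integrableOn_compact isCompact_Icc
    rw [Set.uIcc_of_le (by norm_num : (0:ℝ) ≤ 1)] at this
    exact this.congr fun x _ => hF x
  -- derivative of F at interior points
  have hFderiv : ∀ x ∈ Set.Ioo pM 1, HasDerivAt F (f x) x := by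
    intro x hx
    have hx01 : x ∈ Set.Ioo (0:ℝ) 1 := ⟨lt_trans hpM0 hx.1, hx.2⟩
    have hnhds : Set.Icc (0:ℝ) 1 ∈ nhds x := Icc_mem_nhds hx01.1 hx01.2
    have hca : ContinuousAt f x := hf_cont.continuousAt hnhds
    have hmeas : StronglyMeasurableAtFilter f (nhds x) MeasureTheory.volume := by
      refine ⟨Set.Icc 0 1, hnhds, ?_⟩
      exact (hf_cont.aestronglyMeasurable measurableSet_Icc)
    have h := intervalIntegral.integral_hasDerivAt_right
      (hint 0 x (by simp) ⟨hx01.1.le, hx01.2.le⟩) hmeas hca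
    have : F = fun u => ∫ t in (0:ℝ)..u, f t := funext hF
    rw [this]
    exact h
  -- apply the antitone criterion
  apply antitoneOn_of_deriv_nonpos (convex_Icc pM 1)
  · -- continuity
    apply ContinuousOn.mul continuousOn_id
    apply ContinuousOn.sub continuousOn_const
    exact hFcont.mono (Set.Icc_subset_Icc hpM0.le le_rfl)
  · -- differentiability on interior
    rw [interior_Icc]
    intro x hx
    have h := ((hasDerivAt_id x).mul ((hasDerivAt_const x (1:ℝ)).sub (hFderiv x hx)))
    exact h.differentiableAt.differentiableWithinAt
  · -- deriv nonpositive
    rw [interior_Icc]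
    intro x hx
    have h : HasDerivAt (fun p : ℝ => p * (1 - F p))
        (1 * (1 - F x) + x * (0 - f x)) x :=
      (hasDerivAt_id x).mul ((hasDerivAt_const x (1:ℝ)).sub (hFderiv x hx))
    rw [h.deriv]
    have hk := hkey x ⟨hx.1.le, hx.2.le⟩
    have hfx := hf_pos x ⟨le_trans hpM0.le hx.1.le, hx.2.le⟩
    have : pM * f x ≤ x * f x := mul_le_mul_of_nonneg_right hx.1.le hfx.le
    simp only [id_eq, one_mul, zero_sub]
    nlinarith
end

section
/- The function R̃(p) = ∫₀^p ( ∫₀^v v′·(J−1)·F(v′)^{J−2}·f(v′) dv′ ) f(v) dv + ∫_p^1 ( ∫_{v−p}^v v′·(J−1)·F(v′)^{J−2}·f(v′) dv′ ) f(v) dv is monotone (weakly increasing) in p on [0,1]. (Hence platform revenue R(p_B) = λ·J·R̃(p_B) under data-augmented bidding is increasing in the platform's market share λ, since p_B is increasing in λ.) -/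
/-!
With `G x = ∫₀ˣ g`, where `g v' = v' (J - 1) F(v')^{J-2} f(v')`, the inner integral over
`[v - p, v]` is `G v - G (v - p)`, so `R̃(p) = ∫₀¹ G f - ∫ₚ¹ G (v - p) f(v) dv`. Since `g ≥ 0`,
`G` is nonnegative and increasing; raising `p` both lowers `G (v - p)` pointwise and shrinks the
domain `[p, 1]` of a nonnegative integrand, so the subtracted term decreases.
-/

open intervalIntegral Set MeasureTheory

section Primitive

variable {g : ℝ → ℝ} {a b : ℝ}

theorem continuousOn_primitive_of_le (hab : a ≤ b) (hg : ContinuousOn g (Icc a b)) :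
    ContinuousOn (fun x => ∫ t in a..x, g t) (Icc a b) := by
  rw [← uIcc_of_le hab] at hg ⊢
  exact continuousOn_primitive_interval hg.integrableOn_uIcc

theorem monotoneOn_primitive (hg : ContinuousOn g (Icc a b)) (hg0 : ∀ x ∈ Icc a b, 0 ≤ g x) :
    MonotoneOn (fun x => ∫ t in a..x, g t) (Icc a b) := by
  intro x hx y hy hxy
  refine integral_mono_interval le_rfl hx.1 hxy
    (ae_restrict_of_forall_mem measurableSet_Ioc fun t ht => hg0 t ⟨ht.1.le, ht.2.trans hy.2⟩)
    ((hg.mono (Icc_subset_Icc le_rfl hy.2)).intervalIntegrable_of_Icc hy.1)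

end Primitive

section Revenue

variable {f g G : ℝ → ℝ}

theorem intervalIntegrable_comp_sub_mul (hG : ContinuousOn G (Icc 0 1))
    (hf : ContinuousOn f (Icc 0 1)) {p a b : ℝ} (hp : 0 ≤ p) (hpa : p ≤ a) (hab : a ≤ b)
    (hb : b ≤ 1) : IntervalIntegrable (fun v => G (v - p) * f v) volume a b := by
  refine ContinuousOn.intervalIntegrable_of_Icc hab (ContinuousOn.mul ?_ ?_)
  · exact hG.comp (continuousOn_id.sub continuousOn_const)
      fun v hv => ⟨by linarith [hv.1], by linarith [hv.2]⟩
  · exact hf.mono (Icc_subset_Icc (hp.trans hpa) hb)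

theorem antitoneOn_integral_comp_sub_mul (hG : ContinuousOn G (Icc 0 1))
    (hG_mono : MonotoneOn G (Icc 0 1)) (hG0 : ∀ x ∈ Icc 0 1, 0 ≤ G x)
    (hf : ContinuousOn f (Icc 0 1)) (hf0 : ∀ x ∈ Icc 0 1, 0 ≤ f x) :
    AntitoneOn (fun p => ∫ v in p..1, G (v - p) * f v) (Icc 0 1) := by
  intro p hp q hq hpq
  calc ∫ v in q..1, G (v - q) * f v
      ≤ ∫ v in q..1, G (v - p) * f v := by
        refine integral_mono_on hq.2 (intervalIntegrable_comp_sub_mul hG hf hq.1 le_rfl hq.2 le_rfl)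
          (intervalIntegrable_comp_sub_mul hG hf hp.1 hpq hq.2 le_rfl) fun v hv => ?_
        refine mul_le_mul_of_nonneg_right ?_ (hf0 v ⟨hq.1.trans hv.1, hv.2⟩)
        exact hG_mono ⟨by linarith [hv.1], by linarith [hv.2, hq.1]⟩
          ⟨by linarith [hv.1], by linarith [hv.2, hp.1]⟩ (by linarith)
    _ ≤ ∫ v in p..1, G (v - p) * f v := by
        refine integral_mono_interval hpq hq.2 le_rfl
          (ae_restrict_of_forall_mem measurableSet_Ioc fun v hv => ?_)
          (intervalIntegrable_comp_sub_mul hG hf hp.1 le_rfl hp.2 le_rfl)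
        exact mul_nonneg (hG0 _ ⟨by linarith [hv.1], by linarith [hv.2, hp.1]⟩)
          (hf0 v ⟨hp.1.trans hv.1.le, hv.2⟩)

theorem revenue_eq_sub (hg : ContinuousOn g (Icc 0 1)) (hf : ContinuousOn f (Icc 0 1))
    {p : ℝ} (hp : p ∈ Icc (0 : ℝ) 1) :
    (∫ v in (0:ℝ)..p, (∫ v' in (0:ℝ)..v, g v') * f v)
        + ∫ v in p..1, (∫ v' in (v - p)..v, g v') * f v
      = (∫ v in (0:ℝ)..1, (∫ t in (0:ℝ)..v, g t) * f v)
        - ∫ v in p..1, (∫ t in (0:ℝ)..(v - p), g t) * f v := by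
  set G : ℝ → ℝ := fun x => ∫ t in (0:ℝ)..x, g t
  have hG := continuousOn_primitive_of_le zero_le_one hg
  have hgi : ∀ x ∈ Icc (0 : ℝ) 1, IntervalIntegrable g volume 0 x := fun x hx =>
    (hg.mono (Icc_subset_Icc le_rfl hx.2)).intervalIntegrable_of_Icc hx.1
  have hGf : ∀ x ∈ Icc (0 : ℝ) 1, ∀ y ∈ Icc (0 : ℝ) 1, x ≤ y →
      IntervalIntegrable (fun v => G v * f v) volume x y := fun x hx y hy hxy =>
    ((hG.mul hf).mono (Icc_subset_Icc hx.1 hy.2)).intervalIntegrable_of_Icc hxy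
  have hinner : ∀ v ∈ uIcc p 1,
      (∫ v' in (v - p)..v, g v') * f v = G v * f v - G (v - p) * f v := by
    intro v hv
    rw [uIcc_of_le hp.2] at hv
    rw [← integral_interval_sub_left (hgi v ⟨hp.1.trans hv.1, hv.2⟩)
      (hgi (v - p) ⟨by linarith [hv.1], by linarith [hv.2, hp.1]⟩), sub_mul]
  rw [integral_congr hinner, integral_sub (hGf p hp 1 ⟨zero_le_one, le_rfl⟩ hp.2)
      (intervalIntegrable_comp_sub_mul hG hf hp.1 le_rfl hp.2 le_rfl),
    ← integral_add_adjacent_intervals (hGf 0 ⟨le_rfl, zero_le_one⟩ p hp hp.1)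
      (hGf p hp 1 ⟨zero_le_one, le_rfl⟩ hp.2)]
  ring

theorem monotoneOn_revenue (hf : ContinuousOn f (Icc 0 1)) (hf0 : ∀ x ∈ Icc 0 1, 0 ≤ f x)
    (hg : ContinuousOn g (Icc 0 1)) (hg0 : ∀ x ∈ Icc 0 1, 0 ≤ g x) :
    MonotoneOn
      (fun p : ℝ =>
        (∫ v in (0:ℝ)..p, (∫ v' in (0:ℝ)..v, g v') * f v)
        + ∫ v in p..1, (∫ v' in (v - p)..v, g v') * f v)
      (Icc 0 1) := by
  have hG_mono := monotoneOn_primitive hg hg0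
  have hG0 : ∀ x ∈ Icc (0 : ℝ) 1, 0 ≤ ∫ t in (0:ℝ)..x, g t := fun x hx =>
    integral_nonneg hx.1 fun t ht => hg0 t ⟨ht.1, ht.2.trans hx.2⟩
  intro p hp q hq hpq
  simp only [revenue_eq_sub hg hf hp, revenue_eq_sub hg hf hq]
  exact sub_le_sub_left (antitoneOn_integral_comp_sub_mul
    (continuousOn_primitive_of_le zero_le_one hg) hG_mono hG0 hf hf0 hp hq hpq) _

end Revenue

theorem platform_revenue_monotone_general
    (f F : ℝ → ℝ)
    (hf_cont : ContinuousOn f (Set.Icc 0 1))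
    (hf_pos : ∀ x ∈ Set.Icc (0:ℝ) 1, 0 < f x)
    (hF : ∀ x, F x = ∫ t in (0:ℝ)..x, f t)
    (J : ℕ) (hJ : 2 ≤ J) :
    MonotoneOn
      (fun p : ℝ =>
        (∫ v in (0:ℝ)..p,
            (∫ v' in (0:ℝ)..v, v' * (((J : ℝ) - 1) * F v' ^ (J - 2) * f v')) * f v)
        + ∫ v in p..1,
            (∫ v' in (v - p)..v, v' * (((J : ℝ) - 1) * F v' ^ (J - 2) * f v')) * f v)
      (Set.Icc 0 1) := by
  have hf0 : ∀ x ∈ Icc (0:ℝ) 1, 0 ≤ f x := fun x hx => (hf_pos x hx).le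
  have hF_eq : F = fun x => ∫ t in (0:ℝ)..x, f t := funext hF
  have hF_cont : ContinuousOn F (Icc 0 1) :=
    hF_eq ▸ continuousOn_primitive_of_le zero_le_one hf_cont
  have hF0 : ∀ x ∈ Icc (0:ℝ) 1, 0 ≤ F x := fun x hx => by
    rw [hF x]
    exact integral_nonneg hx.1 fun t ht => hf0 t ⟨ht.1, ht.2.trans hx.2⟩
  have hJ1 : (0:ℝ) ≤ (J:ℝ) - 1 := by
    have : (2:ℝ) ≤ J := by exact_mod_cast hJ
    linarith
  refine monotoneOn_revenue hf_cont hf0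
    (continuousOn_id.mul ((continuousOn_const.mul (hF_cont.pow _)).mul hf_cont)) fun x hx => ?_
  exact mul_nonneg hx.1 (mul_nonneg (mul_nonneg hJ1 (pow_nonneg (hF0 x hx) _)) (hf0 x hx))

/-- The normalized platform-revenue function R̃ is weakly
increasing in the posted price p on [0,1]; hence platform revenue under
data-augmented bidding is increasing in the platform's market share. -/
theorem platform_revenue_monotone
    (f F : ℝ → ℝ)
    (hf_cont : ContinuousOn f (Set.Icc 0 1))
    (hf_pos : ∀ x ∈ Set.Icc (0:ℝ) 1, 0 < f x)
    (hf_logconcave : ConcaveOn ℝ (Set.Icc 0 1) (Real.log ∘ f))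
    (hf_int : (∫ t in (0:ℝ)..1, f t) = 1)
    (hF : ∀ x, F x = ∫ t in (0:ℝ)..x, f t)
    (J : ℕ) (hJ : 2 ≤ J) :
    MonotoneOn
      (fun p : ℝ =>
        (∫ v in (0:ℝ)..p,
            (∫ v' in (0:ℝ)..v, v' * (((J : ℝ) - 1) * F v' ^ (J - 2) * f v')) * f v)
        + ∫ v in p..1,
            (∫ v' in (v - p)..v, v' * (((J : ℝ) - 1) * F v' ^ (J - 2) * f v')) * f v)
      (Set.Icc 0 1) :=
  platform_revenue_monotone_general f F hf_cont hf_pos hF J hJ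
end

section
/- Assume regularity condition (H), and let p_M ∈ (0,1) satisfy 1 − F(p_M) = p_M·f(p_M). Let J₂ ≥ J₁ ≥ 2 be real numbers with J₁·ln F(1 − p_M) < −1 (i.e., J₁ > −1/ln F(1 − p_M)), and for i = 1,2 let p_B(J_i) ∈ (0,1) satisfy (1−λ)·(1 − F(p) − p·f(p)) + λ·J_i·∫_p^1 F(v − p)^{J_i − 1} f(v) dv = 0 at p = p_B(J_i). Then p_B(J₂) ≤ p_B(J₁). (The equilibrium posted price with data-augmented bidding is decreasing in the number of bidders.) -/
open intervalIntegral

/-- Pointwise monotonicity in `J` of `J * a ^ (J - 1)` under the condition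
`J₁ * log a < -1`. -/
lemma key_rpow (a J₁ J₂ : ℝ) (ha : 0 < a) (hJ₁ : 0 < J₁) (hJ : J₁ ≤ J₂)
    (hL : J₁ * Real.log a < -1) :
    J₂ * a ^ (J₂ - 1) ≤ J₁ * a ^ (J₁ - 1) := by
  set L := Real.log a with hLdef
  have hd : 0 ≤ J₂ - J₁ := by linarith
  have h1 : J₂ ≤ J₁ * Real.exp (-((J₂ - J₁) * L)) := by
    have he := Real.add_one_le_exp (-((J₂ - J₁) * L))
    have h2 := mul_le_mul_of_nonneg_left he hJ₁.le
    have h3 : 0 ≤ (J₂ - J₁) * (-(J₁ * L) - 1) :=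
      mul_nonneg hd (by linarith)
    nlinarith
  have hE : (0 : ℝ) < Real.exp ((J₂ - J₁) * L) := Real.exp_pos _
  have h2 : J₂ * Real.exp ((J₂ - J₁) * L) ≤ J₁ := by
    have := mul_le_mul_of_nonneg_right h1 hE.le
    calc J₂ * Real.exp ((J₂ - J₁) * L)
        ≤ J₁ * Real.exp (-((J₂ - J₁) * L)) * Real.exp ((J₂ - J₁) * L) := this
      _ = J₁ * Real.exp (-((J₂ - J₁) * L) + (J₂ - J₁) * L) := by
          rw [mul_assoc, ← Real.exp_add]
      _ = J₁ := by simp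
  rw [Real.rpow_def_of_pos ha, Real.rpow_def_of_pos ha, ← hLdef]
  have hsplit : Real.exp (L * (J₂ - 1))
      = Real.exp ((J₂ - J₁) * L) * Real.exp (L * (J₁ - 1)) := by
    rw [← Real.exp_add]; ring_nf
  rw [hsplit]
  have hE' : (0 : ℝ) < Real.exp (L * (J₁ - 1)) := Real.exp_pos _
  nlinarith [mul_le_mul_of_nonneg_right h2 hE'.le]

set_option maxHeartbeats 1600000 in
/-- Under regularity condition (H), when J₁ > −1/ln F(1 − p_M),
the equilibrium posted price with data-augmented bidding is decreasing in the
number of bidders (treated as a real parameter). -/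
theorem bidding_price_decreasing_in_J
    (f F : ℝ → ℝ)
    (hf_cont : ContinuousOn f (Set.Icc 0 1))
    (hf_pos : ∀ x ∈ Set.Icc (0:ℝ) 1, 0 < f x)
    (hf_logconcave : ConcaveOn ℝ (Set.Icc 0 1) (Real.log ∘ f))
    (hf_int : (∫ t in (0:ℝ)..1, f t) = 1)
    (hF : ∀ x, F x = ∫ t in (0:ℝ)..x, f t)
    (lam : ℝ) (hlam : lam ∈ Set.Ioo (0:ℝ) 1)
    (hreg : AntitoneOn (fun p : ℝ => 1 - F p - p * f p) (Set.Icc 0 1))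
    (pM : ℝ) (hpM : pM ∈ Set.Ioo (0:ℝ) 1) (hM : 1 - F pM = pM * f pM)
    (J₁ J₂ : ℝ) (hJ₁ : 2 ≤ J₁) (hJ₁₂ : J₁ ≤ J₂)
    (hJcond : J₁ * Real.log (F (1 - pM)) < -1)
    (p₁ p₂ : ℝ) (hp₁ : p₁ ∈ Set.Ioo (0:ℝ) 1) (hp₂ : p₂ ∈ Set.Ioo (0:ℝ) 1)
    (h₁ : (1 - lam) * (1 - F p₁ - p₁ * f p₁)
        + lam * J₁ * (∫ v in p₁..1, F (v - p₁) ^ (J₁ - 1) * f v) = 0)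
    (h₂ : (1 - lam) * (1 - F p₂ - p₂ * f p₂)
        + lam * J₂ * (∫ v in p₂..1, F (v - p₂) ^ (J₂ - 1) * f v) = 0) :
    p₂ ≤ p₁ := by
  obtain ⟨hp₁0, hp₁1⟩ := hp₁
  obtain ⟨hp₂0, hp₂1⟩ := hp₂
  obtain ⟨hpM0, hpM1⟩ := hpM
  obtain ⟨hlam0, hlam1⟩ := hlam
  have hJ₁pos : (0:ℝ) < J₁ := by linarith
  -- interval integrability of f on subintervals of [0,1]
  have hfi : ∀ a b : ℝ, 0 ≤ a → a ≤ b → b ≤ 1 → IntervalIntegrable f MeasureTheory.volume a b := by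
    intro a b ha hab hb1
    apply ContinuousOn.intervalIntegrable
    apply hf_cont.mono
    rw [Set.uIcc_of_le hab]
    exact Set.Icc_subset_Icc ha hb1
  -- nonnegativity of f on [0,1]
  have hf_nonneg : ∀ x ∈ Set.Icc (0:ℝ) 1, 0 ≤ f x := fun x hx => (hf_pos x hx).le
  -- F is monotone on [0,1]
  have hFmono : ∀ x y : ℝ, 0 ≤ x → x ≤ y → y ≤ 1 → F x ≤ F y := by
    intro x y hx hxy hy
    rw [hF x, hF y]
    rw [← intervalIntegral.integral_add_adjacent_intervals
      (hfi 0 x le_rfl hx (by linarith)) (hfi x y hx hxy hy)]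
    have : 0 ≤ ∫ t in x..y, f t := by
      apply intervalIntegral.integral_nonneg hxy
      intro u hu
      exact hf_nonneg u ⟨by linarith [hu.1], by linarith [hu.2]⟩
    linarith
  -- F is nonnegative on [0,1]
  have hF0 : F 0 = 0 := by rw [hF 0, intervalIntegral.integral_same]
  have hFnonneg : ∀ x : ℝ, 0 ≤ x → x ≤ 1 → 0 ≤ F x := by
    intro x hx hx1
    have := hFmono 0 x le_rfl hx hx1
    linarith [hF0 ▸ this]
  -- F is positive on (0,1]
  have hFpos : ∀ x : ℝ, 0 < x → x ≤ 1 → 0 < F x := by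
    intro x hx hx1
    rw [hF x]
    apply intervalIntegral.intervalIntegral_pos_of_pos_on
      (hfi 0 x le_rfl hx.le hx1)
    · intro u hu
      exact hf_pos u ⟨hu.1.le, by linarith [hu.2]⟩
    · exact hx
  -- F is continuous on [0,1]
  have hFcont : ContinuousOn F (Set.Icc 0 1) := by
    have h1 : ContinuousOn (fun x => ∫ t in (0:ℝ)..x, f t) (Set.Icc 0 1) := by
      have := intervalIntegral.continuousOn_primitive_interval
        (μ := MeasureTheory.volume) (f := f) (a := (0:ℝ)) (b := 1)
        (by
          rw [Set.uIcc_of_le (by norm_num : (0:ℝ) ≤ 1)]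
          exact (hf_cont.mono (by simp)).integrableOn_compact isCompact_Icc)
      rwa [Set.uIcc_of_le (by norm_num : (0:ℝ) ≤ 1)] at this
    exact ContinuousOn.congr h1 (fun x _ => hF x)
  -- continuity of rpow with positive exponent
  have hrpow_cont : ∀ c : ℝ, 0 < c → Continuous (fun x : ℝ => x ^ c) := by
    intro c hc
    exact continuous_iff_continuousAt.mpr
      (fun x => Real.continuousAt_rpow_const x c (Or.inr hc.le))
  -- continuity of the integrands
  have hint_cont : ∀ (q p c : ℝ), 0 ≤ q → q ≤ p → p ≤ 1 → 0 < c →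
      ContinuousOn (fun v => F (v - q) ^ c * f v) (Set.Icc p 1) := by
    intro q p c hq hqp hp1 hc
    apply ContinuousOn.mul
    · have h1 : ContinuousOn (fun v : ℝ => F (v - q)) (Set.Icc p 1) := by
        apply hFcont.comp (Continuous.continuousOn (continuous_id.sub continuous_const))
        intro v hv
        simp only [Set.mem_Icc, Pi.sub_apply, id_eq] at hv ⊢
        exact ⟨by linarith [hv.1], by linarith [hv.2]⟩
      exact (hrpow_cont c hc).comp_continuousOn h1
    · exact hf_cont.mono (Set.Icc_subset_Icc (by linarith) le_rfl)
  have hint_cont' : ∀ (q p c : ℝ), 0 ≤ q → q ≤ p → p ≤ 1 → 0 < c →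
      ContinuousOn (fun v => F (v - q) ^ c * f v) (Set.Icc p 1) := hint_cont
  -- interval integrability of the integrands
  have hint_int : ∀ (q p p' c : ℝ), 0 ≤ q → q ≤ p → p ≤ p' → p' ≤ 1 → 0 < c →
      IntervalIntegrable (fun v => F (v - q) ^ c * f v) MeasureTheory.volume p p' := by
    intro q p p' c hq hqp hpp' hp1 hc
    apply ContinuousOn.intervalIntegrable
    apply (hint_cont q p c hq hqp (by linarith) hc).mono
    rw [Set.uIcc_of_le hpp']
    exact Set.Icc_subset_Icc le_rfl hp1
  have hJ₁1 : (0:ℝ) < J₁ - 1 := by linarith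
  have hJ₂1 : (0:ℝ) < J₂ - 1 := by linarith
  -- the value at pM of the regularity function is zero
  have hgM : 1 - F pM - pM * f pM = 0 := by linarith
  -- the second integral is positive
  have hI₂pos : 0 < ∫ v in p₂..1, F (v - p₂) ^ (J₂ - 1) * f v := by
    apply intervalIntegral.intervalIntegral_pos_of_pos_on
      (hint_int p₂ p₂ 1 (J₂ - 1) hp₂0.le le_rfl hp₂1.le le_rfl hJ₂1)
    · intro v hv
      apply mul_pos
      · apply Real.rpow_pos_of_pos
        exact hFpos (v - p₂) (by linarith [hv.1]) (by linarith [hv.2])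
      · exact hf_pos v ⟨by linarith [hv.1], hv.2.le⟩
    · exact hp₂1
  -- hence g p₂ < 0 and p₂ > pM
  have hg₂neg : 1 - F p₂ - p₂ * f p₂ < 0 := by
    nlinarith [mul_pos (mul_pos hlam0 (lt_of_lt_of_le hJ₁pos hJ₁₂)) hI₂pos]
  have hpMp₂ : pM < p₂ := by
    by_contra h
    push_neg at h
    have := hreg (Set.mem_Icc.mpr ⟨hp₂0.le, hp₂1.le⟩)
      (Set.mem_Icc.mpr ⟨hpM0.le, hpM1.le⟩) h
    simp only at this
    linarith
  -- main argument: suppose p₁ < p₂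
  by_contra hcon
  push_neg at hcon
  -- Step (i): g p₂ ≤ g p₁
  have hA : 1 - F p₂ - p₂ * f p₂ ≤ 1 - F p₁ - p₁ * f p₁ := by
    have := hreg (Set.mem_Icc.mpr ⟨hp₁0.le, hp₁1.le⟩)
      (Set.mem_Icc.mpr ⟨hp₂0.le, hp₂1.le⟩) hcon.le
    simpa using this
  -- Step (ii): J₂ * I(p₂,J₂) ≤ J₁ * I(p₂,J₁)
  have hB : J₂ * (∫ v in p₂..1, F (v - p₂) ^ (J₂ - 1) * f v)
      ≤ J₁ * (∫ v in p₂..1, F (v - p₂) ^ (J₁ - 1) * f v) := by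
    rw [← intervalIntegral.integral_const_mul, ← intervalIntegral.integral_const_mul]
    apply intervalIntegral.integral_mono_on hp₂1.le
    · exact (hint_int p₂ p₂ 1 (J₂ - 1) hp₂0.le le_rfl hp₂1.le le_rfl hJ₂1).const_mul _
    · exact (hint_int p₂ p₂ 1 (J₁ - 1) hp₂0.le le_rfl hp₂1.le le_rfl hJ₁1).const_mul _
    intro v hv
    have hv1 : 0 ≤ v - p₂ := by linarith [hv.1]
    have hv2 : v - p₂ ≤ 1 := by linarith [hv.2]
    have hfv : 0 ≤ f v := hf_nonneg v ⟨by linarith [hv.1], hv.2⟩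
    have ha0 : 0 ≤ F (v - p₂) := hFnonneg _ hv1 hv2
    rcases eq_or_lt_of_le ha0 with ha | ha
    · rw [← ha, Real.zero_rpow (by linarith), Real.zero_rpow (by linarith)]
      simp
    · -- F (v - p₂) ≤ F (1 - pM)
      have hle : F (v - p₂) ≤ F (1 - pM) := by
        apply hFmono (v - p₂) (1 - pM) hv1 (by linarith [hv.2]) (by linarith)
      have hlog : J₁ * Real.log (F (v - p₂)) < -1 := by
        have := Real.log_le_log ha hle
        nlinarith
      have := key_rpow (F (v - p₂)) J₁ J₂ ha hJ₁pos hJ₁₂ hlog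
      nlinarith
  -- Step (iii): I(p₂,J₁) ≤ ∫_{p₂}^1 F(v - p₁)^{J₁-1} f v
  have hC : (∫ v in p₂..1, F (v - p₂) ^ (J₁ - 1) * f v)
      ≤ ∫ v in p₂..1, F (v - p₁) ^ (J₁ - 1) * f v := by
    apply intervalIntegral.integral_mono_on hp₂1.le
    · exact hint_int p₂ p₂ 1 (J₁ - 1) hp₂0.le le_rfl hp₂1.le le_rfl hJ₁1
    · exact hint_int p₁ p₂ 1 (J₁ - 1) hp₁0.le hcon.le hp₂1.le le_rfl hJ₁1
    intro v hv
    have hfv : 0 ≤ f v := hf_nonneg v ⟨by linarith [hv.1], hv.2⟩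
    apply mul_le_mul_of_nonneg_right _ hfv
    apply Real.rpow_le_rpow (hFnonneg _ (by linarith [hv.1]) (by linarith [hv.2]))
    · exact hFmono (v - p₂) (v - p₁) (by linarith [hv.1]) (by linarith)
        (by linarith [hv.2])
    · linarith
  -- Step (iv): ∫_{p₂}^1 F(v - p₁)^{J₁-1} f v < I(p₁,J₁)
  have hD : (∫ v in p₂..1, F (v - p₁) ^ (J₁ - 1) * f v)
      < ∫ v in p₁..1, F (v - p₁) ^ (J₁ - 1) * f v := by
    have hsplit := intervalIntegral.integral_add_adjacent_intervals
      (hint_int p₁ p₁ p₂ (J₁ - 1) hp₁0.le le_rfl hcon.le hp₂1.le hJ₁1)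
      (hint_int p₁ p₂ 1 (J₁ - 1) hp₁0.le hcon.le hp₂1.le le_rfl hJ₁1)
    have hmid : 0 < ∫ v in p₁..p₂, F (v - p₁) ^ (J₁ - 1) * f v := by
      apply intervalIntegral.intervalIntegral_pos_of_pos_on
        (hint_int p₁ p₁ p₂ (J₁ - 1) hp₁0.le le_rfl hcon.le hp₂1.le hJ₁1)
      · intro v hv
        apply mul_pos
        · apply Real.rpow_pos_of_pos
          exact hFpos (v - p₁) (by linarith [hv.1]) (by linarith [hv.2])
        · exact hf_pos v ⟨by linarith [hv.1], by linarith [hv.2]⟩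
      · exact hcon
    linarith
  -- Conclude
  have hlamJ : 0 < lam * J₁ := mul_pos hlam0 hJ₁pos
  have e1 : lam * (J₂ * (∫ v in p₂..1, F (v - p₂) ^ (J₂ - 1) * f v))
      ≤ lam * (J₁ * (∫ v in p₂..1, F (v - p₂) ^ (J₁ - 1) * f v)) :=
    mul_le_mul_of_nonneg_left hB hlam0.le
  have e2 : lam * J₁ * (∫ v in p₂..1, F (v - p₂) ^ (J₁ - 1) * f v)
      ≤ lam * J₁ * (∫ v in p₂..1, F (v - p₁) ^ (J₁ - 1) * f v) :=
    mul_le_mul_of_nonneg_left hC hlamJ.le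
  have e3 : lam * J₁ * (∫ v in p₂..1, F (v - p₁) ^ (J₁ - 1) * f v)
      < lam * J₁ * (∫ v in p₁..1, F (v - p₁) ^ (J₁ - 1) * f v) :=
    (mul_lt_mul_iff_right₀ hlamJ).mpr hD
  have e4 : (1 - lam) * (1 - F p₂ - p₂ * f p₂)
      ≤ (1 - lam) * (1 - F p₁ - p₁ * f p₁) :=
    mul_le_mul_of_nonneg_left hA (by linarith)
  nlinarith [e1, e2, e3, e4, h₁, h₂]
end

section
/- Let p_M ∈ (0,1) satisfy 1 − F(p_M) = p_M·f(p_M). Suppose there exists B > 0 with F(v)/f(v) < B for all v ∈ (0,1], and suppose J > 1 + B/p_M. Then D_C(p_M) < 0, where D_C(p) = (1−λ)·(1 − F(p) − p·f(p)) + λ·J·∫_p^1 ( F(v)^{J−1} − p·(J−1)·F(v)^{J−2}·f(v) )·f(v) dv. Moreover, if in addition D_C is strictly antitone on (0,1), then any p_C ∈ (0,1) with D_C(p_C) = 0 satisfies p_C < p_M. (With sufficiently many firms, the independent managed-campaign candidate price falls below the monopoly price, so the equilibrium posted price p_I = max(p_C, p_M) equals p_M.) -/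
open intervalIntegral MeasureTheory Set

/-!
At the monopoly price the stand-alone term of `D_C` vanishes, so the sign of `D_C(p_M)` is that of
the integral. Since `F < B f` and `B < p_M (J - 1)` (a rewriting of `J > 1 + B / p_M`), for every
`v ∈ (p_M, 1)` we get `F(v)^{J-1} = F(v)^{J-2} F(v) < p_M (J - 1) F(v)^{J-2} f(v)`, so the
integrand is negative on `(p_M, 1)`. A strictly decreasing `D_C` then vanishes only to the left
of `p_M`.
-/

theorem intervalIntegral_neg_of_neg_on {g : ℝ → ℝ} {a b : ℝ}
    (hg : IntervalIntegrable g volume a b) (hneg : ∀ x ∈ Ioo a b, g x < 0)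
    (hab : a < b) : ∫ x in a..b, g x < 0 := by
  have hpos : 0 < ∫ x in a..b, -g x :=
    intervalIntegral_pos_of_pos_on hg.neg (fun x hx => neg_pos.2 (hneg x hx)) hab
  rwa [intervalIntegral.integral_neg, neg_pos] at hpos

theorem pow_sub_one_lt_mul_pow_sub_two_mul {n : ℕ} (hn : 2 ≤ n) {x y c : ℝ} (hx : 0 < x)
    (hxy : x < c * y) : x ^ (n - 1) < c * (x ^ (n - 2) * y) := by
  obtain ⟨m, rfl⟩ := Nat.exists_eq_add_of_le' hn
  calc x ^ (m + 2 - 1) = x ^ m * x := by rw [show m + 2 - 1 = m + 1 by omega, pow_succ]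
    _ < x ^ m * (c * y) := mul_lt_mul_of_pos_left hxy (pow_pos hx m)
    _ = c * (x ^ (m + 2 - 2) * y) := by rw [Nat.add_sub_cancel]; ring

section Primitive

variable {f F : ℝ → ℝ} {a b : ℝ}

theorem continuousOn_of_eq_primitive (hab : a ≤ b) (hf : ContinuousOn f (Icc a b))
    (hF : ∀ x, F x = ∫ t in a..x, f t) : ContinuousOn F (Icc a b) := by
  have h := continuousOn_primitive_interval (μ := volume) (f := f) (a := a) (b := b)
    (by rw [uIcc_of_le hab]; exact hf.integrableOn_Icc)
  rw [uIcc_of_le hab] at h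
  exact h.congr fun x _ => hF x

theorem pos_of_eq_primitive (hf : ContinuousOn f (Icc a b)) (hf_pos : ∀ x ∈ Icc a b, 0 < f x)
    (hF : ∀ x, F x = ∫ t in a..x, f t) {x : ℝ} (hx : x ∈ Ioc a b) : 0 < F x := by
  rw [hF x]
  refine intervalIntegral_pos_of_pos_on ?_ (fun t ht => hf_pos t ⟨ht.1.le, ht.2.le.trans hx.2⟩)
    hx.1
  exact (hf.mono (Icc_subset_Icc le_rfl hx.2)).intervalIntegrable_of_Icc hx.1.le

end Primitive

theorem campaign_integral_neg {f F : ℝ → ℝ} (hf_cont : ContinuousOn f (Icc 0 1))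
    (hf_pos : ∀ x ∈ Icc (0:ℝ) 1, 0 < f x) (hF : ∀ x, F x = ∫ t in (0:ℝ)..x, f t)
    {J : ℕ} (hJ : 2 ≤ J) {p B : ℝ} (hp : p ∈ Ioo (0:ℝ) 1)
    (hFf : ∀ v ∈ Ioc (0:ℝ) 1, F v / f v < B) (hB : B < p * ((J : ℝ) - 1)) :
    ∫ v in p..1, (F v ^ (J - 1) - p * (((J : ℝ) - 1) * F v ^ (J - 2) * f v)) * f v < 0 := by
  have hsub : Icc p 1 ⊆ Icc (0:ℝ) 1 := Icc_subset_Icc hp.1.le le_rfl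
  have hFc := (continuousOn_of_eq_primitive zero_le_one hf_cont hF).mono hsub
  have hfc := hf_cont.mono hsub
  refine intervalIntegral_neg_of_neg_on ?_ (fun v hv => ?_) hp.2
  · refine ContinuousOn.intervalIntegrable_of_Icc hp.2.le ?_
    exact ((hFc.pow _).sub (continuousOn_const.mul
      ((continuousOn_const.mul (hFc.pow _)).mul hfc))).mul hfc
  have hv01 : v ∈ Ioc (0:ℝ) 1 := ⟨hp.1.trans hv.1, hv.2.le⟩
  have hfv : 0 < f v := hf_pos v (Ioc_subset_Icc_self hv01)
  have hFv : F v < p * ((J : ℝ) - 1) * f v :=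
    ((div_lt_iff₀ hfv).1 (hFf v hv01)).trans (mul_lt_mul_of_pos_right hB hfv)
  have key := pow_sub_one_lt_mul_pow_sub_two_mul hJ (pos_of_eq_primitive hf_cont hf_pos hF hv01)
    (by rwa [mul_assoc] at hFv)
  refine mul_neg_of_neg_of_pos (sub_neg.2 ?_) hfv
  linarith

theorem independent_campaign_price_below_monopoly_general
    (f F : ℝ → ℝ)
    (hf_cont : ContinuousOn f (Set.Icc 0 1))
    (hf_pos : ∀ x ∈ Set.Icc (0:ℝ) 1, 0 < f x)
    (hF : ∀ x, F x = ∫ t in (0:ℝ)..x, f t)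
    (J : ℕ) (hJ : 2 ≤ J)
    (lam : ℝ) (hlam : lam ∈ Set.Ioo (0:ℝ) 1)
    (pM : ℝ) (hpM : pM ∈ Set.Ioo (0:ℝ) 1) (hM : 1 - F pM = pM * f pM)
    (B : ℝ) (hFf : ∀ v ∈ Set.Ioc (0:ℝ) 1, F v / f v < B)
    (hJbig : 1 + B / pM < (J : ℝ))
    (DC : ℝ → ℝ)
    (hDC : ∀ p, DC p = (1 - lam) * (1 - F p - p * f p)
        + lam * (J : ℝ) * ∫ v in p..1,
            (F v ^ (J - 1) - p * (((J : ℝ) - 1) * F v ^ (J - 2) * f v)) * f v) :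
    DC pM < 0 ∧
    (StrictAntiOn DC (Set.Ioo 0 1) →
      ∀ pC ∈ Set.Ioo (0:ℝ) 1, DC pC = 0 → pC < pM) := by
  have hB_lt : B < pM * ((J : ℝ) - 1) := by
    rw [← div_lt_iff₀' hpM.1]
    linarith
  have hDC_neg : DC pM < 0 := by
    rw [hDC pM, hM, sub_self, mul_zero, zero_add]
    exact mul_neg_of_pos_of_neg (by have := hlam.1; positivity)
      (campaign_integral_neg hf_cont hf_pos hF hJ hpM hFf hB_lt)
  refine ⟨hDC_neg, fun hanti pC hpC hpC0 => ?_⟩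
  exact (StrictAntiOn.lt_iff_gt hanti hpM hpC).1 (hpC0 ▸ hDC_neg)

/-- With a bounded inverse likelihood ratio F/f < B and
sufficiently many firms (J > 1 + B/p_M), the independent managed-campaign
first-order condition is negative at the monopoly price, so (if D_C is
strictly decreasing) the candidate price p_C falls below p_M. -/
theorem independent_campaign_price_below_monopoly
    (f F : ℝ → ℝ)
    (hf_cont : ContinuousOn f (Set.Icc 0 1))
    (hf_pos : ∀ x ∈ Set.Icc (0:ℝ) 1, 0 < f x)
    (hf_logconcave : ConcaveOn ℝ (Set.Icc 0 1) (Real.log ∘ f))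
    (hf_int : (∫ t in (0:ℝ)..1, f t) = 1)
    (hF : ∀ x, F x = ∫ t in (0:ℝ)..x, f t)
    (J : ℕ) (hJ : 2 ≤ J)
    (lam : ℝ) (hlam : lam ∈ Set.Ioo (0:ℝ) 1)
    (pM : ℝ) (hpM : pM ∈ Set.Ioo (0:ℝ) 1) (hM : 1 - F pM = pM * f pM)
    (B : ℝ) (hB : 0 < B) (hFf : ∀ v ∈ Set.Ioc (0:ℝ) 1, F v / f v < B)
    (hJbig : 1 + B / pM < (J : ℝ))
    (DC : ℝ → ℝ)
    (hDC : ∀ p, DC p = (1 - lam) * (1 - F p - p * f p)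
        + lam * (J : ℝ) * ∫ v in p..1,
            (F v ^ (J - 1) - p * (((J : ℝ) - 1) * F v ^ (J - 2) * f v)) * f v) :
    DC pM < 0 ∧
    (StrictAntiOn DC (Set.Ioo 0 1) →
      ∀ pC ∈ Set.Ioo (0:ℝ) 1, DC pC = 0 → pC < pM) :=
  independent_campaign_price_below_monopoly_general f F hf_cont hf_pos hF J hJ lam hlam pM hpM hM B
    hFf hJbig DC hDC
end

section
/- Assume regularity condition (H). Let p_C ∈ (0,1) satisfy D_C(p_C) = 0 and let p_V ∈ (0,1) satisfy D_V(p_V) = 0. Then p_C ≤ p_V. (The off-platform posted price under the independent managed campaign is weakly below that under the sophisticated best-value managed campaign; hence consumer surplus and welfare are higher under the independent managed campaign.) -/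
/-!
Suppose `p_V < p_C`. The best-value condition `D_V` is antitone on `[0,1]`: its off-platform
term is antitone by (H), and `∫_p^1 F^{J-1} f` shrinks as `p` grows. Moreover
`D_V(p) - D_C(p) = λ J p (J-1) ∫_p^1 F^{J-2} f² > 0` on `(0,1)`. Hence
`0 = D_C(p_C) < D_V(p_C) ≤ D_V(p_V) = 0`, a contradiction.
-/

open intervalIntegral MeasureTheory Set

noncomputable def bestValueFOC (f F : ℝ → ℝ) (J : ℕ) (lam p : ℝ) : ℝ :=
  (1 - lam) * (1 - F p - p * f p) + lam * (J : ℝ) * (∫ v in p..1, F v ^ (J - 1) * f v)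

noncomputable def independentFOC (f F : ℝ → ℝ) (J : ℕ) (lam p : ℝ) : ℝ :=
  (1 - lam) * (1 - F p - p * f p)
    + lam * (J : ℝ) * (∫ v in p..1,
        (F v ^ (J - 1) - p * (((J : ℝ) - 1) * F v ^ (J - 2) * f v)) * f v)

theorem antitoneOn_integral_of_nonneg {g : ℝ → ℝ} {a b : ℝ} (hg : ContinuousOn g (Icc a b))
    (hg_nonneg : ∀ x ∈ Icc a b, 0 ≤ g x) :
    AntitoneOn (fun p => ∫ v in p..b, g v) (Icc a b) := by
  intro p hp q hq hpq
  have hsplit : (∫ v in p..q, g v) + (∫ v in q..b, g v) = ∫ v in p..b, g v :=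
    integral_add_adjacent_intervals
      ((hg.mono (Icc_subset_Icc hp.1 hq.2)).intervalIntegrable_of_Icc hpq)
      ((hg.mono (Icc_subset_Icc hq.1 le_rfl)).intervalIntegrable_of_Icc hq.2)
  have hnonneg : 0 ≤ ∫ v in p..q, g v :=
    integral_nonneg hpq fun x hx => hg_nonneg x ⟨hp.1.trans hx.1, hx.2.trans hq.2⟩
  linarith

section Primitive

variable {f F : ℝ → ℝ}

theorem continuousOn_Icc_of_primitive (hf_cont : ContinuousOn f (Icc 0 1))
    (hF : ∀ x, F x = ∫ t in (0:ℝ)..x, f t) : ContinuousOn F (Icc 0 1) := by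
  have hint : IntegrableOn f (uIcc 0 1) := by
    rw [uIcc_of_le zero_le_one]
    exact hf_cont.integrableOn_Icc
  have := continuousOn_primitive_interval hint
  rw [uIcc_of_le zero_le_one] at this
  exact this.congr fun x _ => hF x

theorem nonneg_of_primitive (hf_nonneg : ∀ x ∈ Icc (0:ℝ) 1, 0 ≤ f x)
    (hF : ∀ x, F x = ∫ t in (0:ℝ)..x, f t) {x : ℝ} (hx : x ∈ Icc (0:ℝ) 1) : 0 ≤ F x := by
  rw [hF]
  exact integral_nonneg hx.1 fun t ht => hf_nonneg t ⟨ht.1, ht.2.trans hx.2⟩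

theorem pos_of_primitive (hf_cont : ContinuousOn f (Icc 0 1))
    (hf_pos : ∀ x ∈ Icc (0:ℝ) 1, 0 < f x) (hF : ∀ x, F x = ∫ t in (0:ℝ)..x, f t)
    {x : ℝ} (hx : x ∈ Ioc (0:ℝ) 1) : 0 < F x := by
  rw [hF]
  refine intervalIntegral_pos_of_pos_on ?_ (fun t ht => hf_pos t ⟨ht.1.le, ht.2.le.trans hx.2⟩) hx.1
  exact (hf_cont.mono (Icc_subset_Icc le_rfl hx.2)).intervalIntegrable_of_Icc hx.1.le

end Primitive

section FirstOrderConditions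

variable {f F : ℝ → ℝ} {J : ℕ} {lam : ℝ}

theorem bestValueFOC_antitoneOn (hf_cont : ContinuousOn f (Icc 0 1))
    (hf_pos : ∀ x ∈ Icc (0:ℝ) 1, 0 < f x) (hF : ∀ x, F x = ∫ t in (0:ℝ)..x, f t)
    (hlam : lam ∈ Icc (0:ℝ) 1)
    (hreg : AntitoneOn (fun p : ℝ => 1 - F p - p * f p) (Icc 0 1)) :
    AntitoneOn (bestValueFOC f F J lam) (Icc 0 1) := by
  have hf_nonneg : ∀ x ∈ Icc (0:ℝ) 1, 0 ≤ f x := fun x hx => (hf_pos x hx).le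
  have hintegral : AntitoneOn (fun p => ∫ v in p..1, F v ^ (J - 1) * f v) (Icc 0 1) :=
    antitoneOn_integral_of_nonneg
      (((continuousOn_Icc_of_primitive hf_cont hF).pow _).mul hf_cont)
      fun x hx => mul_nonneg (pow_nonneg (nonneg_of_primitive hf_nonneg hF hx) _) (hf_nonneg x hx)
  intro p hp q hq hpq
  unfold bestValueFOC
  exact add_le_add (mul_le_mul_of_nonneg_left (hreg hp hq hpq) (sub_nonneg.2 hlam.2))
    (mul_le_mul_of_nonneg_left (hintegral hp hq hpq) (mul_nonneg hlam.1 J.cast_nonneg))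

theorem independentFOC_lt_bestValueFOC (hf_cont : ContinuousOn f (Icc 0 1))
    (hf_pos : ∀ x ∈ Icc (0:ℝ) 1, 0 < f x) (hF : ∀ x, F x = ∫ t in (0:ℝ)..x, f t)
    (hJ : 2 ≤ J) (hlam : 0 < lam) {p : ℝ} (hp : p ∈ Ioo (0:ℝ) 1) :
    independentFOC f F J lam p < bestValueFOC f F J lam p := by
  have hF_cont : ContinuousOn F (Icc p 1) :=
    (continuousOn_Icc_of_primitive hf_cont hF).mono (Icc_subset_Icc hp.1.le le_rfl)
  have hf_cont' : ContinuousOn f (Icc p 1) := hf_cont.mono (Icc_subset_Icc hp.1.le le_rfl)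
  have hJ1 : (0:ℝ) < (J : ℝ) - 1 := by
    have : (2:ℝ) ≤ J := by exact_mod_cast hJ
    linarith
  have hgap : 0 < ∫ v in p..1, p * ((J : ℝ) - 1) * F v ^ (J - 2) * f v * f v := by
    refine intervalIntegral_pos_of_pos_on ?_ (fun x hx => ?_) hp.2
    · exact (((continuousOn_const.mul (hF_cont.pow _)).mul hf_cont').mul
        hf_cont').intervalIntegrable_of_Icc hp.2.le
    · have hx01 : x ∈ Icc (0:ℝ) 1 := ⟨hp.1.le.trans hx.1.le, hx.2.le⟩
      have hFx := pos_of_primitive hf_cont hf_pos hF ⟨hp.1.trans hx.1, hx.2.le⟩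
      have hfx := hf_pos x hx01
      have hp0 := hp.1
      positivity
  have hdiff : bestValueFOC f F J lam p - independentFOC f F J lam p
      = lam * J * ∫ v in p..1, p * ((J : ℝ) - 1) * F v ^ (J - 2) * f v * f v := by
    unfold bestValueFOC independentFOC
    rw [add_sub_add_left_eq_sub, ← mul_sub, ← intervalIntegral.integral_sub]
    · congr 1
      exact integral_congr fun x _ => by ring
    · exact ((hF_cont.pow _).mul hf_cont').intervalIntegrable_of_Icc hp.2.le
    · exact (((hF_cont.pow _).sub (continuousOn_const.mul ((continuousOn_const.mul
        (hF_cont.pow _)).mul hf_cont'))).mul hf_cont').intervalIntegrable_of_Icc hp.2.le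
  have hJ0 : (0:ℝ) < J := by positivity
  have : 0 < lam * J * ∫ v in p..1, p * ((J : ℝ) - 1) * F v ^ (J - 2) * f v * f v := by
    positivity
  linarith

end FirstOrderConditions

theorem independent_below_sophisticated_general
    (f F : ℝ → ℝ)
    (hf_cont : ContinuousOn f (Set.Icc 0 1))
    (hf_pos : ∀ x ∈ Set.Icc (0:ℝ) 1, 0 < f x)
    (hF : ∀ x, F x = ∫ t in (0:ℝ)..x, f t)
    (J : ℕ) (hJ : 2 ≤ J)
    (lam : ℝ) (hlam : lam ∈ Set.Ioo (0:ℝ) 1)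
    (hreg : AntitoneOn (fun p : ℝ => 1 - F p - p * f p) (Set.Icc 0 1))
    (pC pV : ℝ) (hpC : pC ∈ Set.Ioo (0:ℝ) 1) (hpV : pV ∈ Set.Ioo (0:ℝ) 1)
    (hC : (1 - lam) * (1 - F pC - pC * f pC)
        + lam * (J : ℝ) * (∫ v in pC..1,
            (F v ^ (J - 1) - pC * (((J : ℝ) - 1) * F v ^ (J - 2) * f v)) * f v) = 0)
    (hV : (1 - lam) * (1 - F pV - pV * f pV)
        + lam * (J : ℝ) * (∫ v in pV..1, F v ^ (J - 1) * f v) = 0) :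
    pC ≤ pV := by
  by_contra! hlt
  have hgap : independentFOC f F J lam pC < bestValueFOC f F J lam pC :=
    independentFOC_lt_bestValueFOC hf_cont hf_pos hF hJ hlam.1 hpC
  have hmono : bestValueFOC f F J lam pC ≤ bestValueFOC f F J lam pV :=
    bestValueFOC_antitoneOn hf_cont hf_pos hF (Ioo_subset_Icc_self hlam) hreg
      (Ioo_subset_Icc_self hpV) (Ioo_subset_Icc_self hpC) hlt.le
  have hC' : independentFOC f F J lam pC = 0 := hC
  have hV' : bestValueFOC f F J lam pV = 0 := hV
  linarith

/-- The off-platform posted price under the independent managed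
campaign is weakly below that under the sophisticated best-value managed
campaign: p_C ≤ p_V. -/
theorem independent_below_sophisticated
    (f F : ℝ → ℝ)
    (hf_cont : ContinuousOn f (Set.Icc 0 1))
    (hf_pos : ∀ x ∈ Set.Icc (0:ℝ) 1, 0 < f x)
    (hf_logconcave : ConcaveOn ℝ (Set.Icc 0 1) (Real.log ∘ f))
    (hf_int : (∫ t in (0:ℝ)..1, f t) = 1)
    (hF : ∀ x, F x = ∫ t in (0:ℝ)..x, f t)
    (J : ℕ) (hJ : 2 ≤ J)
    (lam : ℝ) (hlam : lam ∈ Set.Ioo (0:ℝ) 1)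
    (hreg : AntitoneOn (fun p : ℝ => 1 - F p - p * f p) (Set.Icc 0 1))
    (pC pV : ℝ) (hpC : pC ∈ Set.Ioo (0:ℝ) 1) (hpV : pV ∈ Set.Ioo (0:ℝ) 1)
    (hC : (1 - lam) * (1 - F pC - pC * f pC)
        + lam * (J : ℝ) * (∫ v in pC..1,
            (F v ^ (J - 1) - pC * (((J : ℝ) - 1) * F v ^ (J - 2) * f v)) * f v) = 0)
    (hV : (1 - lam) * (1 - F pV - pV * f pV)
        + lam * (J : ℝ) * (∫ v in pV..1, F v ^ (J - 1) * f v) = 0) :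
    pC ≤ pV :=
  independent_below_sophisticated_general f F hf_cont hf_pos hF J hJ lam hlam hreg pC pV hpC hpV hC
    hV
end

section
/- Let p_M ∈ (0,1) satisfy 1 − F(p_M) = p_M·f(p_M) and let p_P ∈ (0,1) satisfy D_P(p_P) = 0. Then p_M < p_P. If moreover regularity condition (H) holds and p_V ∈ (0,1) satisfies D_V(p_V) = 0, then p_P < p_V. (The equilibrium posted price under the cohort-privacy restriction lies strictly between the monopoly price and the sophisticated managed-campaign price.) -/
open intervalIntegral

/-- Concavity shift inequality for log-concave positive functions. -/
private lemma concave_shift {f : ℝ → ℝ}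
    (hf_pos : ∀ x ∈ Set.Icc (0:ℝ) 1, 0 < f x)
    (hc : ConcaveOn ℝ (Set.Icc 0 1) (Real.log ∘ f))
    {p q t : ℝ} (h0 : 0 ≤ p) (hpq : p ≤ q) (hqt : q ≤ t) (ht : t ≤ 1) :
    f p * f t ≤ f q * f (t - (q - p)) := by
  have hp1 : p ∈ Set.Icc (0:ℝ) 1 := ⟨h0, by linarith⟩
  have ht1 : t ∈ Set.Icc (0:ℝ) 1 := ⟨by linarith, ht⟩
  have hq1 : q ∈ Set.Icc (0:ℝ) 1 := ⟨by linarith, by linarith⟩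
  have hs1 : t - (q - p) ∈ Set.Icc (0:ℝ) 1 := ⟨by linarith, by linarith⟩
  have key : Real.log (f p) + Real.log (f t)
      ≤ Real.log (f q) + Real.log (f (t - (q - p))) := by
    rcases eq_or_lt_of_le (hpq.trans hqt) with h | h
    · have h1 : q = p := le_antisymm (h ▸ hqt) hpq
      have h2 : t = p := h.symm
      rw [h1, h2]; simp
    · set L := t - p with hLdef
      have hL : 0 < L := by simp only [hLdef]; linarith
      have ha0 : 0 ≤ (t - q) / L := div_nonneg (by linarith) hL.le
      have hb0 : 0 ≤ (q - p) / L := div_nonneg (by linarith) hL.le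
      have hab : (t - q) / L + (q - p) / L = 1 := by
        field_simp; linarith
      have h1 := hc.2 hp1 ht1 ha0 hb0 hab
      have h2 := hc.2 hp1 ht1 hb0 ha0 (by linarith)
      have e1 : ((t - q) / L) • p + ((q - p) / L) • t = q := by
        simp only [smul_eq_mul]; field_simp; ring
      have e2 : ((q - p) / L) • p + ((t - q) / L) • t = t - (q - p) := by
        simp only [smul_eq_mul]; field_simp; ring
      rw [e1] at h1
      rw [e2] at h2
      simp only [smul_eq_mul, Function.comp_apply] at h1 h2
      have hsum1 : (t - q) / L * Real.log (f p) + (q - p) / L * Real.log (f p)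
          = Real.log (f p) := by rw [← add_mul, hab, one_mul]
      have hsum2 : (t - q) / L * Real.log (f t) + (q - p) / L * Real.log (f t)
          = Real.log (f t) := by rw [← add_mul, hab, one_mul]
      linarith [h1, h2, hsum1, hsum2]
  have hfp := hf_pos p hp1
  have hft := hf_pos t ht1
  have hfq := hf_pos q hq1
  have hfs := hf_pos _ hs1
  calc f p * f t = Real.exp (Real.log (f p) + Real.log (f t)) := by
        rw [Real.exp_add, Real.exp_log hfp, Real.exp_log hft]
    _ ≤ Real.exp (Real.log (f q) + Real.log (f (t - (q - p)))) := Real.exp_le_exp.2 key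
    _ = f q * f (t - (q - p)) := by
        rw [Real.exp_add, Real.exp_log hfq, Real.exp_log hfs]

/-- The equilibrium posted price under the cohort-privacy
restriction lies strictly between the monopoly price and the sophisticated
managed-campaign price: p_M < p_P, and (under (H)) p_P < p_V. -/
theorem privacy_price_between
    (f F : ℝ → ℝ)
    (hf_cont : ContinuousOn f (Set.Icc 0 1))
    (hf_pos : ∀ x ∈ Set.Icc (0:ℝ) 1, 0 < f x)
    (hf_logconcave : ConcaveOn ℝ (Set.Icc 0 1) (Real.log ∘ f))
    (hf_int : (∫ t in (0:ℝ)..1, f t) = 1)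
    (hF : ∀ x, F x = ∫ t in (0:ℝ)..x, f t)
    (J : ℕ) (hJ : 2 ≤ J)
    (lam : ℝ) (hlam : lam ∈ Set.Ioo (0:ℝ) 1)
    (pM pP : ℝ) (hpM : pM ∈ Set.Ioo (0:ℝ) 1) (hpP : pP ∈ Set.Ioo (0:ℝ) 1)
    (hM : 1 - F pM = pM * f pM)
    (hP : (1 - lam) * (1 - F pP - pP * f pP)
        + lam * (1 - F pP ^ J - (J : ℝ) * pP * F pP ^ (J - 1) * f pP) = 0) :
    pM < pP ∧
    (AntitoneOn (fun p : ℝ => 1 - F p - p * f p) (Set.Icc 0 1) →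
      ∀ pV ∈ Set.Ioo (0:ℝ) 1,
        (1 - lam) * (1 - F pV - pV * f pV)
          + lam * (J : ℝ) * (∫ v in pV..1, F v ^ (J - 1) * f v) = 0 →
        pP < pV) := by
  obtain ⟨hl0, hl1⟩ := hlam
  obtain ⟨hpM0, hpM1⟩ := hpM
  obtain ⟨hpP0, hpP1⟩ := hpP
  -- basic integrability
  have hint : ∀ a b : ℝ, a ∈ Set.Icc (0:ℝ) 1 → b ∈ Set.Icc (0:ℝ) 1 →
      IntervalIntegrable f MeasureTheory.volume a b := fun a b ha hb =>
    (hf_cont.mono (Set.uIcc_subset_Icc ha hb)).intervalIntegrable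
  -- survival function
  have hsurv : ∀ p : ℝ, 0 ≤ p → p ≤ 1 → 1 - F p = ∫ t in p..1, f t := by
    intro p h0 h1
    have hadd := intervalIntegral.integral_add_adjacent_intervals
      (hint 0 p ⟨le_refl 0, zero_le_one⟩ ⟨h0, h1⟩)
      (hint p 1 ⟨h0, h1⟩ ⟨zero_le_one, le_refl 1⟩)
    rw [hF p]
    rw [hf_int] at hadd
    linarith
  -- positivity of integrals of f
  have hintpos : ∀ a b : ℝ, 0 ≤ a → a < b → b ≤ 1 → 0 < ∫ t in a..b, f t := by
    intro a b h0 hab h1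
    refine intervalIntegral.intervalIntegral_pos_of_pos_on
      (hint a b ⟨h0, by linarith⟩ ⟨by linarith, h1⟩) (fun x hx => ?_) hab
    exact hf_pos x ⟨by linarith [hx.1], by linarith [hx.2]⟩
  have hintnonneg : ∀ a b : ℝ, 0 ≤ a → a ≤ b → b ≤ 1 → 0 ≤ ∫ t in a..b, f t := by
    intro a b h0 hab h1
    rcases eq_or_lt_of_le hab with h | h
    · simp [h]
    · exact (hintpos a b h0 h h1).le
  -- F monotone, F values
  have hFmono : ∀ p q : ℝ, 0 ≤ p → p ≤ q → q ≤ 1 → F p ≤ F q := by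
    intro p q h0 hpq h1
    have hadd := intervalIntegral.integral_add_adjacent_intervals
      (hint 0 p ⟨le_refl 0, zero_le_one⟩ ⟨h0, by linarith⟩)
      (hint p q ⟨h0, by linarith⟩ ⟨by linarith, h1⟩)
    have := hintnonneg p q h0 hpq h1
    rw [hF p, hF q, ← hadd]
    linarith
  have hFpos : ∀ p : ℝ, 0 < p → p ≤ 1 → 0 < F p := by
    intro p h0 h1
    rw [hF p]
    exact hintpos 0 p (le_refl 0) h0 h1
  have hFlt1 : ∀ p : ℝ, 0 ≤ p → p < 1 → F p < 1 := by
    intro p h0 h1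
    have := hintpos p 1 h0 h1 (le_refl 1)
    rw [← hsurv p h0 h1.le] at this
    linarith
  -- hazard-rate monotonicity from log-concavity
  have hazard : ∀ p q : ℝ, 0 ≤ p → p ≤ q → q ≤ 1 →
      f p * (∫ t in q..1, f t) ≤ f q * (∫ t in p..1, f t) := by
    intro p q h0 hpq hq1
    have hq0 : 0 ≤ q := le_trans h0 hpq
    have hp1 : p ≤ 1 := le_trans hpq hq1
    have hδ1 : p ≤ 1 - (q - p) := by linarith
    have hδ2 : 1 - (q - p) ≤ 1 := by linarith
    -- continuity of shifted integrand on [q,1]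
    have hshift_cont : ContinuousOn (fun t => f q * f (t - (q - p))) (Set.uIcc q 1) := by
      apply ContinuousOn.mul continuousOn_const
      apply hf_cont.comp ((continuous_id.sub continuous_const).continuousOn)
      intro x hx
      rw [Set.uIcc_of_le hq1] at hx
      have : x - (q - p) ∈ Set.Icc (0:ℝ) 1 := ⟨by linarith [hx.1], by linarith [hx.2]⟩
      exact this
    have hleft_cont : ContinuousOn (fun t => f p * f t) (Set.uIcc q 1) := by
      apply ContinuousOn.mul continuousOn_const
      apply hf_cont.mono
      rw [Set.uIcc_of_le hq1]
      exact Set.Icc_subset_Icc hq0 (le_refl 1)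
    have hmono : (∫ t in q..1, f p * f t) ≤ ∫ t in q..1, f q * f (t - (q - p)) := by
      refine intervalIntegral.integral_mono_on hq1
        hleft_cont.intervalIntegrable hshift_cont.intervalIntegrable (fun t htq => ?_)
      exact concave_shift hf_pos hf_logconcave h0 hpq htq.1 htq.2
    have hchg : (∫ t in q..1, f (t - (q - p))) = ∫ t in p..(1 - (q - p)), f t := by
      rw [intervalIntegral.integral_comp_sub_right f (q - p)]
      norm_num
    have htail : (∫ t in p..(1 - (q - p)), f t) ≤ ∫ t in p..1, f t := by
      have hadd := intervalIntegral.integral_add_adjacent_intervals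
        (hint p (1 - (q - p)) ⟨h0, hp1⟩ ⟨by linarith, hδ2⟩)
        (hint (1 - (q - p)) 1 ⟨by linarith, hδ2⟩ ⟨zero_le_one, le_refl 1⟩)
      have := hintnonneg (1 - (q - p)) 1 (by linarith) hδ2 (le_refl 1)
      linarith
    have hfq0 : 0 ≤ f q := (hf_pos q ⟨hq0, hq1⟩).le
    calc f p * (∫ t in q..1, f t) = ∫ t in q..1, f p * f t := by
          rw [intervalIntegral.integral_const_mul]
      _ ≤ ∫ t in q..1, f q * f (t - (q - p)) := hmono
      _ = f q * ∫ t in q..1, f (t - (q - p)) := by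
          rw [intervalIntegral.integral_const_mul]
      _ = f q * ∫ t in p..(1 - (q - p)), f t := by rw [hchg]
      _ ≤ f q * ∫ t in p..1, f t := mul_le_mul_of_nonneg_left htail hfq0
  -- geometric sum inequality
  have hgeom : ∀ u : ℝ, 0 < u → u < 1 → (J : ℝ) * u ^ (J - 1) * (1 - u) < 1 - u ^ J := by
    intro u hu0 hu1
    have hsum : (J : ℝ) * u ^ (J - 1) < ∑ i ∈ Finset.range J, u ^ i := by
      have hlt : ∑ i ∈ Finset.range J, u ^ (J - 1) < ∑ i ∈ Finset.range J, u ^ i := by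
        refine Finset.sum_lt_sum (fun i hi => ?_) ⟨0, Finset.mem_range.2 (by omega), ?_⟩
        · exact pow_le_pow_of_le_one hu0.le hu1.le (by
            have := Finset.mem_range.1 hi; omega)
        · simpa using pow_lt_one₀ hu0.le hu1 (by omega)
      simpa [Finset.sum_const, Finset.card_range, mul_comm] using hlt
    have hgs : (1 - u) * ∑ i ∈ Finset.range J, u ^ i = 1 - u ^ J := by
      calc (1 - u) * ∑ i ∈ Finset.range J, u ^ i
          = -((∑ i ∈ Finset.range J, u ^ i) * (u - 1)) := by ring
        _ = -(u ^ J - 1) := by rw [geom_sum_mul]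
        _ = 1 - u ^ J := by ring
    have h3 : (1 - u) * ((J : ℝ) * u ^ (J - 1))
        < (1 - u) * ∑ i ∈ Finset.range J, u ^ i :=
      mul_lt_mul_of_pos_left hsum (by linarith)
    rw [hgs] at h3
    calc (J : ℝ) * u ^ (J - 1) * (1 - u)
        = (1 - u) * ((J : ℝ) * u ^ (J - 1)) := by ring
      _ < 1 - u ^ J := h3
  -- PART 1 : pM < pP
  have part1 : pM < pP := by
    by_contra hcon
    push_neg at hcon  -- pP ≤ pM
    -- Step A: G(pP) ≥ 0
    have hz := hazard pP pM hpP0.le hcon hpM1.le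
    rw [← hsurv pM hpM0.le hpM1.le, ← hsurv pP hpP0.le hpP1.le, hM] at hz
    have hfM := hf_pos pM ⟨hpM0.le, hpM1.le⟩
    have hfP := hf_pos pP ⟨hpP0.le, hpP1.le⟩
    have hGA : pM * f pP ≤ 1 - F pP := by
      by_contra hcc
      push_neg at hcc
      have := mul_lt_mul_of_pos_right hcc hfM
      nlinarith [hz, this]
    have hG : 0 ≤ 1 - F pP - pP * f pP := by
      have h1 : pP * f pP ≤ pM * f pP := mul_le_mul_of_nonneg_right hcon hfP.le
      linarith [hGA]
    -- Step B: H(pP) > 0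
    set u := F pP with hu
    have hu0 : 0 < u := hFpos pP hpP0 hpP1.le
    have hu1 : u < 1 := hFlt1 pP hpP0.le hpP1
    have hupow : (0:ℝ) ≤ u ^ (J - 1) := pow_nonneg hu0.le _
    have hHB : 0 < 1 - u ^ J - (J : ℝ) * pP * u ^ (J - 1) * f pP := by
      have h1 : (J : ℝ) * pP * u ^ (J - 1) * f pP ≤ (J : ℝ) * u ^ (J - 1) * (1 - u) := by
        have hpf : pP * f pP ≤ 1 - u := by linarith [hG]
        have hc : (0:ℝ) ≤ (J : ℝ) * u ^ (J - 1) :=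
          mul_nonneg (Nat.cast_nonneg J) hupow
        calc (J : ℝ) * pP * u ^ (J - 1) * f pP
            = (J : ℝ) * u ^ (J - 1) * (pP * f pP) := by ring
          _ ≤ (J : ℝ) * u ^ (J - 1) * (1 - u) := mul_le_mul_of_nonneg_left hpf hc
      have h2 := hgeom u hu0 hu1
      linarith
    have t1 : 0 ≤ (1 - lam) * (1 - F pP - pP * f pP) :=
      mul_nonneg (by linarith) hG
    have t2 : 0 < lam * (1 - u ^ J - (J : ℝ) * pP * u ^ (J - 1) * f pP) :=
      mul_pos hl0 hHB
    have e2 : lam * (1 - u ^ J - (J : ℝ) * pP * u ^ (J - 1) * f pP)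
        = lam * (1 - F pP ^ J - (J : ℝ) * pP * F pP ^ (J - 1) * f pP) := by rw [hu]
    linarith [hP, t1, t2, e2.le, e2.ge]
  refine ⟨part1, ?_⟩
  -- PART 2
  intro hH pV hpV hV
  obtain ⟨hpV0, hpV1⟩ := hpV
  -- continuity of F
  have hFcont : ContinuousOn F (Set.Icc 0 1) := by
    have h1 : ContinuousOn (fun x => ∫ t in (0:ℝ)..x, f t) (Set.Icc 0 1) := by
      have := intervalIntegral.continuousOn_primitive_interval
        (μ := MeasureTheory.volume) (f := f) (a := (0:ℝ)) (b := 1)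
        (by
          rw [Set.uIcc_of_le zero_le_one]
          exact (hf_cont).integrableOn_Icc)
      rwa [Set.uIcc_of_le zero_le_one] at this
    exact h1.congr (fun x _ => hF x)
  -- derivative of F
  have hFderiv : ∀ x ∈ Set.Ioo (0:ℝ) 1, HasDerivAt F (f x) x := by
    intro x hx
    have h1 : HasDerivAt (fun u => ∫ t in (0:ℝ)..u, f t) (f x) x := by
      refine intervalIntegral.integral_hasDerivAt_right
        (hint 0 x ⟨le_refl 0, zero_le_one⟩ ⟨hx.1.le, hx.2.le⟩) ?_ ?_
      · exact (hf_cont.mono Set.Ioo_subset_Icc_self).stronglyMeasurableAtFilter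
          isOpen_Ioo x hx
      · exact (hf_cont x ⟨hx.1.le, hx.2.le⟩).continuousAt (Icc_mem_nhds hx.1 hx.2)
    exact h1.congr_of_eventuallyEq (Filter.Eventually.of_forall (fun u => hF u))
  have hF1 : F 1 = 1 := by rw [hF 1, hf_int]
  -- FTC: the best-value integral
  have hT : ∀ p : ℝ, 0 ≤ p → p ≤ 1 →
      (J : ℝ) * (∫ v in p..1, F v ^ (J - 1) * f v) = 1 - F p ^ J := by
    intro p h0 h1
    have hcontg : ContinuousOn (fun x => F x ^ J) (Set.Icc p 1) :=
      (hFcont.mono (Set.Icc_subset_Icc h0 (le_refl 1))).pow J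
    have hderiv : ∀ x ∈ Set.Ioo p 1, HasDerivWithinAt (fun x => F x ^ J)
        ((J : ℝ) * F x ^ (J - 1) * f x) (Set.Ioi x) x := fun x hx =>
      (((hFderiv x ⟨lt_of_le_of_lt h0 hx.1, hx.2⟩).pow J)).hasDerivWithinAt
    have hintg : IntervalIntegrable (fun x => (J : ℝ) * F x ^ (J - 1) * f x)
        MeasureTheory.volume p 1 := by
      apply ContinuousOn.intervalIntegrable
      rw [Set.uIcc_of_le h1]
      exact (continuousOn_const.mul
        ((hFcont.mono (Set.Icc_subset_Icc h0 (le_refl 1))).pow (J - 1))).mul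
        (hf_cont.mono (Set.Icc_subset_Icc h0 (le_refl 1)))
    have hftc := intervalIntegral.integral_eq_sub_of_hasDeriv_right_of_le h1
      hcontg (fun x hx => hderiv x hx) hintg
    have hpull : (∫ v in p..1, (J : ℝ) * F v ^ (J - 1) * f v)
        = (J : ℝ) * ∫ v in p..1, F v ^ (J - 1) * f v := by
      simp_rw [mul_assoc]
      exact intervalIntegral.integral_const_mul _ _
    rw [hpull] at hftc
    rw [hftc, hF1, one_pow]
  -- evaluate at pP and pV
  have hTP := hT pP hpP0.le hpP1.le
  have hTV := hT pV hpV0.le hpV1.le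
  by_contra hcon
  push_neg at hcon  -- pV ≤ pP
  -- D_V (pP) > 0
  have hfP := hf_pos pP ⟨hpP0.le, hpP1.le⟩
  have huP0 : 0 < F pP := hFpos pP hpP0 hpP1.le
  have hDVP : 0 < (1 - lam) * (1 - F pP - pP * f pP)
      + lam * (J : ℝ) * (∫ v in pP..1, F v ^ (J - 1) * f v) := by
    have hpos : 0 < lam * ((J : ℝ) * pP * F pP ^ (J - 1) * f pP) := by
      have hJpos : (0:ℝ) < (J : ℝ) := by positivity
      have hp2 : (0:ℝ) < (J : ℝ) * pP * F pP ^ (J - 1) * f pP := by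
        have := pow_pos huP0 (J - 1)
        positivity
      exact mul_pos hl0 hp2
    have e : lam * (J : ℝ) * (∫ v in pP..1, F v ^ (J - 1) * f v)
        = lam * (1 - F pP ^ J) := by
      rw [mul_assoc, hTP]
    have e2 : lam * (1 - F pP ^ J - (J : ℝ) * pP * F pP ^ (J - 1) * f pP)
        = lam * (1 - F pP ^ J) - lam * ((J : ℝ) * pP * F pP ^ (J - 1) * f pP) := by
      ring
    linarith [hP, e.le, e.ge, e2.le, e2.ge, hpos]
  -- antitone comparison: D_V(pV) ≥ D_V(pP)
  have hGmono := hH (Set.mem_Icc.2 ⟨hpV0.le, hpV1.le⟩)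
    (Set.mem_Icc.2 ⟨hpP0.le, hpP1.le⟩) hcon
  simp only at hGmono
  have hFVP : F pV ≤ F pP := hFmono pV pP hpV0.le hcon hpP1.le
  have hFpow : F pV ^ J ≤ F pP ^ J :=
    pow_le_pow_left₀ (hFpos pV hpV0 hpV1.le).le hFVP J
  have hTmono : (∫ v in pP..1, F v ^ (J - 1) * f v)
      ≤ ∫ v in pV..1, F v ^ (J - 1) * f v := by
    have hJpos : (0:ℝ) < (J : ℝ) := by positivity
    have h : (J : ℝ) * (∫ v in pP..1, F v ^ (J - 1) * f v)
        ≤ (J : ℝ) * (∫ v in pV..1, F v ^ (J - 1) * f v) := by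
      rw [hTP, hTV]; linarith [hFpow]
    exact le_of_mul_le_mul_left h hJpos
  have hlJ : 0 ≤ lam * (J : ℝ) := by positivity
  have m1 : (1 - lam) * (1 - F pP - pP * f pP)
      ≤ (1 - lam) * (1 - F pV - pV * f pV) :=
    mul_le_mul_of_nonneg_left hGmono (by linarith)
  have m2 : lam * (J : ℝ) * (∫ v in pP..1, F v ^ (J - 1) * f v)
      ≤ lam * (J : ℝ) * (∫ v in pV..1, F v ^ (J - 1) * f v) :=
    mul_le_mul_of_nonneg_left hTmono hlJ
  linarith [hV, hDVP, m1, m2]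
end

section
/- Define the mixture distribution G(v) = (1−λ)·F(v) + λ·F(v)^J, with density g(v) = ((1−λ) + λ·J·F(v)^{J−1})·f(v). For every v ∈ (0,1) with 0 < F(v) < 1, the inverse hazard rate of G strictly exceeds that of F: (1 − G(v))/g(v) > (1 − F(v))/f(v); equivalently, (1 − (1−λ)·F(v) − λ·F(v)^J)·f(v) > (1 − F(v))·((1−λ) + λ·J·F(v)^{J−1})·f(v). (The likelihood ratio of G with respect to F is monotone increasing, so the mixture of loyal and on-platform consumer values has a larger inverse hazard rate than F.) -/
/-! With `u = F v`, the two sides of the cross-multiplied inequality differ by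
`lam · (1 - u ^ J - J u ^ (J - 1) (1 - u)) · f v`, which is positive because the tangent line of the
strictly convex function `x ↦ x ^ J` at `u` lies strictly below its graph at `1`. -/

theorem natCast_mul_pow_pred_mul_one_sub_lt_one_sub_pow {n : ℕ} (hn : 2 ≤ n) {u : ℝ}
    (hu₀ : 0 ≤ u) (hu₁ : u < 1) :
    n * u ^ (n - 1) * (1 - u) < 1 - u ^ n := by
  have hslope := (strictConvexOn_pow hn).lt_slope_of_hasDerivAt hu₀ (zero_le_one : (0 : ℝ) ≤ 1)
    hu₁ (hasDerivAt_pow n u)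
  rwa [slope_def_field, one_pow, lt_div_iff₀ (sub_pos.2 hu₁)] at hslope

theorem one_sub_mul_mixture_density_lt {n : ℕ} (hn : 2 ≤ n) {u lam : ℝ}
    (hu₀ : 0 ≤ u) (hu₁ : u < 1) (hlam : 0 < lam) :
    (1 - u) * ((1 - lam) + lam * n * u ^ (n - 1)) < 1 - (1 - lam) * u - lam * u ^ n := by
  linear_combination
    mul_lt_mul_of_pos_left (natCast_mul_pow_pred_mul_one_sub_lt_one_sub_pow hn hu₀ hu₁) hlam

theorem mixture_inverse_hazard_rate_general
    (f F : ℝ → ℝ)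
    (hf_pos : ∀ x ∈ Set.Icc (0:ℝ) 1, 0 < f x)
    (J : ℕ) (hJ : 2 ≤ J)
    (lam : ℝ) (hlam : lam ∈ Set.Ioo (0:ℝ) 1)
    (v : ℝ) (hv : v ∈ Set.Ioo (0:ℝ) 1) (hFv : 0 < F v) (hFv1 : F v < 1) :
    (1 - ((1 - lam) * F v + lam * F v ^ J))
        / (((1 - lam) + lam * (J : ℝ) * F v ^ (J - 1)) * f v)
      > (1 - F v) / f v
    ∧ (1 - (1 - lam) * F v - lam * F v ^ J) * f v
      > (1 - F v) * (((1 - lam) + lam * (J : ℝ) * F v ^ (J - 1)) * f v) := by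
  obtain ⟨hlam₀, hlam₁⟩ := hlam
  have hfv : 0 < f v := hf_pos v (Set.Ioo_subset_Icc_self hv)
  have hdensity : 0 < (1 - lam) + lam * (J : ℝ) * F v ^ (J - 1) := by
    have : 0 < lam * (J : ℝ) * F v ^ (J - 1) := by positivity
    linarith
  have hkey := one_sub_mul_mixture_density_lt hJ hFv.le hFv1 hlam₀
  have hcross : (1 - F v) * (((1 - lam) + lam * (J : ℝ) * F v ^ (J - 1)) * f v)
      < (1 - (1 - lam) * F v - lam * F v ^ J) * f v := by
    rw [← mul_assoc]
    exact mul_lt_mul_of_pos_right hkey hfv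
  refine ⟨?_, hcross⟩
  rw [gt_iff_lt, div_lt_div_iff₀ hfv (mul_pos hdensity hfv)]
  linear_combination hcross

/-- The mixture distribution G = (1−λ)F + λF^J has a strictly
larger inverse hazard rate than F at every interior point. -/
theorem mixture_inverse_hazard_rate
    (f F : ℝ → ℝ)
    (hf_cont : ContinuousOn f (Set.Icc 0 1))
    (hf_pos : ∀ x ∈ Set.Icc (0:ℝ) 1, 0 < f x)
    (hf_logconcave : ConcaveOn ℝ (Set.Icc 0 1) (Real.log ∘ f))
    (hf_int : (∫ t in (0:ℝ)..1, f t) = 1)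
    (hF : ∀ x, F x = ∫ t in (0:ℝ)..x, f t)
    (J : ℕ) (hJ : 2 ≤ J)
    (lam : ℝ) (hlam : lam ∈ Set.Ioo (0:ℝ) 1)
    (v : ℝ) (hv : v ∈ Set.Ioo (0:ℝ) 1) (hFv : 0 < F v) (hFv1 : F v < 1) :
    (1 - ((1 - lam) * F v + lam * F v ^ J))
        / (((1 - lam) + lam * (J : ℝ) * F v ^ (J - 1)) * f v)
      > (1 - F v) / f v
    ∧ (1 - (1 - lam) * F v - lam * F v ^ J) * f v
      > (1 - F v) * (((1 - lam) + lam * (J : ℝ) * F v ^ (J - 1)) * f v) :=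
  mixture_inverse_hazard_rate_general f F hf_pos J hJ lam hlam v hv hFv hFv1
end

section
/- There exists p_P ∈ (0,1) satisfying D_P(p_P) = 0, i.e., satisfying p_P = (1 − (1−λ)·F(p_P) − λ·F(p_P)^J) / ((1−λ)·f(p_P) + λ·J·F(p_P)^{J−1}·f(p_P)). Moreover, if the map p ↦ D_P(p) is strictly antitone on (0,1), this solution is unique. (Existence of the equilibrium posted price under the cohort-privacy restriction, at which firms sell on and off the platform at the same price.) -/
open intervalIntegral

/-- Existence of the equilibrium posted price under the
cohort-privacy restriction, satisfying the first-order condition D_P(p_P)=0;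
uniqueness holds whenever D_P is strictly decreasing on (0,1). -/
theorem privacy_price_exists
    (f F : ℝ → ℝ)
    (hf_cont : ContinuousOn f (Set.Icc 0 1))
    (hf_pos : ∀ x ∈ Set.Icc (0:ℝ) 1, 0 < f x)
    (hf_logconcave : ConcaveOn ℝ (Set.Icc 0 1) (Real.log ∘ f))
    (hf_int : (∫ t in (0:ℝ)..1, f t) = 1)
    (hF : ∀ x, F x = ∫ t in (0:ℝ)..x, f t)
    (J : ℕ) (hJ : 2 ≤ J)
    (lam : ℝ) (hlam : lam ∈ Set.Ioo (0:ℝ) 1)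
    (DP : ℝ → ℝ)
    (hDP : ∀ p, DP p = (1 - lam) * (1 - F p - p * f p)
        + lam * (1 - F p ^ J - (J : ℝ) * p * F p ^ (J - 1) * f p)) :
    ∃ pP : ℝ, pP ∈ Set.Ioo (0:ℝ) 1 ∧ DP pP = 0 ∧
      pP = (1 - (1 - lam) * F pP - lam * F pP ^ J)
            / ((1 - lam) * f pP + lam * (J : ℝ) * F pP ^ (J - 1) * f pP) ∧
      (StrictAntiOn DP (Set.Ioo 0 1) →
        ∀ q ∈ Set.Ioo (0:ℝ) 1, DP q = 0 → q = pP) := by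
  have huIcc : Set.uIcc (0:ℝ) 1 = Set.Icc 0 1 := Set.uIcc_of_le zero_le_one
  have hf_cont' : ContinuousOn f (Set.uIcc (0:ℝ) 1) := huIcc ▸ hf_cont
  have hInt : IntervalIntegrable f MeasureTheory.volume 0 1 :=
    hf_cont'.intervalIntegrable
  -- continuity of F on [0,1]
  have hFcont : ContinuousOn F (Set.Icc 0 1) := by
    have := intervalIntegral.continuousOn_primitive_interval' hInt
      (by rw [huIcc]; exact Set.left_mem_Icc.2 zero_le_one)
    rw [huIcc] at this
    exact this.congr fun x _ => (hF x)
  have hDPcont : ContinuousOn DP (Set.Icc 0 1) := by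
    have : ContinuousOn (fun p => (1 - lam) * (1 - F p - p * f p)
        + lam * (1 - F p ^ J - (J : ℝ) * p * F p ^ (J - 1) * f p)) (Set.Icc 0 1) := by
      apply ContinuousOn.add
      · exact continuousOn_const.mul ((continuousOn_const.sub hFcont).sub
          (continuousOn_id.mul hf_cont))
      · apply ContinuousOn.mul continuousOn_const
        apply ContinuousOn.sub
        · exact continuousOn_const.sub (hFcont.pow J)
        · exact ((continuousOn_const.mul continuousOn_id).mul (hFcont.pow (J-1))).mul hf_cont
    exact this.congr fun x _ => (hDP x)
  have hF0 : F 0 = 0 := by rw [hF]; simp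
  have hF1 : F 1 = 1 := by rw [hF]; exact hf_int
  have hJ0 : J ≠ 0 := by omega
  have hDP0 : DP 0 = 1 := by
    rw [hDP, hF0]
    simp [zero_pow hJ0]
  have hDP1 : DP 1 < 0 := by
    rw [hDP, hF1]
    have hfp : 0 < f 1 := hf_pos 1 (by simp)
    have hJ2 : (2:ℝ) ≤ (J:ℝ) := by exact_mod_cast hJ
    simp only [one_pow, mul_one, sub_self]
    have h1 : 0 < (1 - lam) * f 1 := mul_pos (by linarith [hlam.2]) hfp
    have h2 : 0 < lam * ((J:ℝ) * f 1) := mul_pos hlam.1 (mul_pos (by linarith) hfp)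
    nlinarith
  have hmem : (0:ℝ) ∈ Set.Ioo (DP 1) (DP 0) := ⟨hDP1, by rw [hDP0]; norm_num⟩
  obtain ⟨pP, hpP, hDPzero⟩ :=
    intermediate_value_Ioo' zero_le_one hDPcont hmem
  refine ⟨pP, hpP, hDPzero, ?_, ?_⟩
  · -- fixed point form
    have hFnn : 0 ≤ F pP := by
      rw [hF]
      apply intervalIntegral.integral_nonneg hpP.1.le
      intro x hx
      exact (hf_pos x ⟨hx.1, hx.2.trans hpP.2.le⟩).le
    have hfp : 0 < f pP := hf_pos pP ⟨hpP.1.le, hpP.2.le⟩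
    have hden : 0 < (1 - lam) * f pP + lam * (J : ℝ) * F pP ^ (J - 1) * f pP := by
      have h1 : 0 < (1 - lam) * f pP := mul_pos (by linarith [hlam.2]) hfp
      have h2 : 0 ≤ lam * (J : ℝ) * F pP ^ (J - 1) * f pP := by
        apply mul_nonneg _ hfp.le
        exact mul_nonneg (mul_nonneg hlam.1.le (Nat.cast_nonneg J)) (pow_nonneg hFnn _)
      linarith
    rw [hDP pP] at hDPzero
    rw [eq_div_iff hden.ne']
    ring_nf
    ring_nf at hDPzero
    linarith
  · intro hanti q hq hq0
    exact hanti.injOn hq hpP (by rw [hq0, hDPzero])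
end
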